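/- arXiv:1309.1020 — 8 statements merged into one kernel-verified Lean document; each statement's English description precedes it below -/
import Mathlib

section
/- Let G be a finite simple graph with chromatic number χ(G), and let K be a clique of size k in G. If χ(G \ K) ≤ χ(G) − k − 1 is false, i.e., suppose χ(G \ K) = χ(G) − k (K is 'not Tihany'), then in every proper (χ(G)−k)-coloring of G \ K, every color class contains a vertex adjacent to all vertices of K. -/
/-!
If no vertex of colour class `i` were complete to `K`, every vertex of that class would have a
non-neighbour in `K`. Give each vertex of `K` a colour of its own and let every vertex of class `i`
take the colour of such a non-neighbour: this colours `G` with `(χ(G) - k - 1) + k = χ(G) - 1`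
colours, which is absurd.
-/

namespace SimpleGraph

variable {V α : Type*} {G : SimpleGraph V} {K : Set V}

open Classical in
noncomputable def Coloring.dissolveClass (c : (G.induce Kᶜ).Coloring α) (i : α)
    (u : ∀ v : ↥Kᶜ, c v = i → K) (hu : ∀ (v : ↥Kᶜ) hv, ¬ G.Adj v (u v hv)) :
    G.Coloring ({j // j ≠ i} ⊕ K) :=
  Coloring.mk
    (fun v => if hv : v ∈ K then .inr ⟨v, hv⟩
      else if hi : c ⟨v, hv⟩ = i then .inr (u ⟨v, hv⟩ hi) else .inl ⟨c ⟨v, hv⟩, hi⟩)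
    (by
      intro v w hvw heq
      split_ifs at heq with hv hw hcw hcv hw hcw hw hcw
      · exact G.ne_of_adj hvw (by simpa using heq)
      · exact hu _ hcw (by simpa [← Sum.inr.inj heq] using hvw.symm)
      · exact hu _ hcv (by simpa [Sum.inr.inj heq] using hvw)
      · exact c.valid (induce_adj.mpr hvw) (hcv.trans hcw.symm)
      · exact c.valid (induce_adj.mpr hvw) (by simpa using heq))

theorem Coloring.colorable_of_forall_exists_not_adj [Fintype α] [Fintype K]
    (c : (G.induce Kᶜ).Coloring α) (i : α) (h : ∀ v : ↥Kᶜ, c v = i → ∃ u ∈ K, ¬ G.Adj v u) :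
    G.Colorable (Fintype.card α - 1 + Fintype.card K) := by
  classical
  choose u hu hadj using h
  convert (dissolveClass c i (fun v hv => ⟨u v hv, hu v hv⟩) hadj).colorable
  rw [Fintype.card_sum, ← Set.card_ne_eq i]
  rfl

end SimpleGraph

theorem stmt0_general {V : Type*} (G : SimpleGraph V)
    (n k : ℕ) (hn : G.chromaticNumber = n)
    (K : Finset V) (hk : K.card = k)
    (c : (G.induce ((↑K : Set V)ᶜ)).Coloring (Fin (n - k))) (i : Fin (n - k)) :
    ∃ v : ((↑K : Set V)ᶜ : Set V), c v = i ∧ ∀ u ∈ K, G.Adj (↑v) u := by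
  by_contra! h
  have hcol := c.colorable_of_forall_exists_not_adj i h
  have hpos : 0 < n - k := i.pos
  simp only [Fintype.card_fin, Finset.coe_sort_coe, Fintype.card_coe, hk] at hcol
  rw [show n - k - 1 + k = n - 1 by omega] at hcol
  have := hn ▸ hcol.chromaticNumber_le
  norm_cast at this
  omega

/-- If a clique `K` of size `k` is "not Tihany", i.e. `χ(G \ K) = χ(G) - k`, then every color
class of every proper `(χ(G)-k)`-coloring of `G \ K` contains a vertex complete to `K`. -/
theorem stmt0 {V : Type*} [Fintype V] (G : SimpleGraph V)
    (n k : ℕ) (hn : G.chromaticNumber = n)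
    (K : Finset V) (hK : G.IsClique (↑K : Set V)) (hk : K.card = k)
    (hnt : (G.induce ((↑K : Set V)ᶜ)).chromaticNumber = ((n - k : ℕ) : ℕ∞))
    (c : (G.induce ((↑K : Set V)ᶜ)).Coloring (Fin (n - k))) (i : Fin (n - k)) :
    ∃ v : ((↑K : Set V)ᶜ : Set V), c v = i ∧ ∀ u ∈ K, G.Adj (↑v) u :=
  stmt0_general G n k hn K hk c i
end

section
/- Let G be a finite simple graph with χ(G) > ω(G), and let K be a clique of G. If the set C(K) of common neighbors of all vertices of K is itself a clique (K is 'dense'), then χ(G \ K) ≥ χ(G) − |K| + 1 (K is Tihany). -/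
/-!
Colour `G \ K` optimally with `c` colours and give the vertices of `K` `|K|` further distinct
colours. Since `K ∪ C(K)` is a clique and `ω(G) < χ(G) ≤ c + |K|`, some colour class `I` of
`G \ K` avoids `C(K)`. Every vertex of `I` then has a non-neighbour in `K` and can take its
colour, which frees the colour of `I`: `χ(G) ≤ c + |K| - 1`.
-/

open SimpleGraph

/-- The set of common neighbors, outside `K`, of all vertices of `K`. -/
def commonNbrs {V : Type*} (G : SimpleGraph V) (K : Set V) : Set V :=
  {x | x ∉ K ∧ ∀ u ∈ K, G.Adj x u}

theorem ENat.sub_add_one_le_of_le_add_sub_one {x : ℕ∞} {c k : ℕ} (hc : 0 < c)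
    (h : x ≤ ↑(c + k - 1)) : x - k + 1 ≤ c := by
  lift x to ℕ using ne_top_of_le_ne_top (by simp) h
  norm_cast at h ⊢
  omega

namespace SimpleGraph

variable {V α : Type*} {G : SimpleGraph V}

theorem isClique_union_commonNbrs {K : Set V} (hK : G.IsClique K)
    (hC : G.IsClique (commonNbrs G K)) : G.IsClique (K ∪ commonNbrs G K) := by
  rintro x (hx | hx) y (hy | hy) hxy
  · exact hK hx hy hxy
  · exact (hy.2 x hx).symm
  · exact hx.2 y hy
  · exact hC hx hy hxy

theorem IsClique.exists_forall_ne_of_cliqueNum_lt [Fintype α] [Finite V] {s : Set V}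
    (hs : G.IsClique s) (f : V → α) (hω : G.cliqueNum < Fintype.card α) :
    ∃ a, ∀ v ∈ s, f v ≠ a := by
  have := Fintype.ofFinite V
  classical
  by_contra! hsurj
  refine hω.not_ge ?_
  calc Fintype.card α = (Finset.univ : Finset α).card := rfl
    _ ≤ s.toFinset.card := Finset.card_le_card_of_surjOn f fun a _ => by simpa using hsurj a
    _ ≤ G.cliqueNum := IsClique.card_le_cliqueNum (tc := by simpa using hs)

namespace Coloring

/-- The colour class of `j` is independent, so all its vertices can move at once to
colours free at them. -/
theorem colorable_card_sub_one [Fintype α] (ψ : G.Coloring α) (j : α)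
    (hfree : ∀ v, ψ v = j → ∃ a ≠ j, ∀ w, G.Adj v w → ψ w ≠ a) :
    G.Colorable (Fintype.card α - 1) := by
  classical
  let recolor (v : V) : {a // a ≠ j} :=
    if h : ψ v = j then ⟨(hfree v h).choose, (hfree v h).choose_spec.1⟩ else ⟨ψ v, h⟩
  have hvalid : ∀ {v w}, G.Adj v w → recolor v ≠ recolor w := by
    intro v w hvw
    simp only [recolor, ne_eq]
    split_ifs with hv hw hw
    · exact absurd (hv.trans hw.symm) (ψ.valid hvw)
    · exact fun h => (hfree v hv).choose_spec.2 w hvw (congrArg Subtype.val h).symm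
    · exact fun h => (hfree w hw).choose_spec.2 v hvw.symm (congrArg Subtype.val h)
    · exact fun h => ψ.valid hvw (congrArg Subtype.val h)
  simpa using (Coloring.mk recolor hvalid).colorable

variable (s : Set V) [DecidablePred (· ∈ s)]

def extendByDistinct (φ : (G.induce sᶜ).Coloring α) : G.Coloring (α ⊕ s) :=
  Coloring.mk (fun v => if h : v ∈ s then .inr ⟨v, h⟩ else .inl (φ ⟨v, h⟩)) <| by
    intro v w hvw
    split_ifs with hv hw hw
    · simpa using G.ne_of_adj hvw
    · simp
    · simp
    · simpa using φ.valid (v := ⟨v, hv⟩) (w := ⟨w, hw⟩) hvw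

variable {s} (φ : (G.induce sᶜ).Coloring α)

theorem extendByDistinct_eq_inr_iff {v : V} {u : s} :
    φ.extendByDistinct s v = .inr u ↔ v = u := by
  change (if h : v ∈ s then _ else _) = _ ↔ _
  split_ifs with hv
  · simp [Subtype.ext_iff]
  · simp only [false_iff]
    rintro rfl
    exact hv u.2

theorem extendByDistinct_apply_of_mem {u : V} (hu : u ∈ s) :
    φ.extendByDistinct s u = .inr ⟨u, hu⟩ :=
  (extendByDistinct_eq_inr_iff φ).2 rfl

theorem exists_forall_adj_extendByDistinct_ne_inr {v : V} (hv : v ∉ s)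
    (hvC : v ∉ commonNbrs G s) : ∃ u : s, ∀ w, G.Adj v w → φ.extendByDistinct s w ≠ .inr u := by
  obtain ⟨u, hu, hvu⟩ : ∃ u ∈ s, ¬ G.Adj v u := by
    simpa [commonNbrs, hv] using hvC
  refine ⟨⟨u, hu⟩, fun w hvw hw => hvu ?_⟩
  rwa [(φ.extendByDistinct_eq_inr_iff).1 hw] at hvw

end Coloring

end SimpleGraph

/-- If `χ(G) > ω(G)` and `K` is a dense clique (its common neighborhood is a clique),
then `K` is Tihany: `χ(G \ K) ≥ χ(G) - |K| + 1`. -/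
theorem stmt1 {V : Type*} [Fintype V] (G : SimpleGraph V)
    (hχω : (G.cliqueNum : ℕ∞) < G.chromaticNumber)
    (K : Finset V) (hK : G.IsClique (↑K : Set V))
    (hdense : G.IsClique (commonNbrs G (↑K : Set V))) :
    G.chromaticNumber - (K.card : ℕ∞) + 1 ≤ (G.induce ((↑K : Set V)ᶜ)).chromaticNumber := by
  classical
  obtain ⟨φ⟩ := (G.induce (↑K : Set V)ᶜ).colorable_chromaticNumber_of_fintype
  set c := (G.induce (↑K : Set V)ᶜ).chromaticNumber.toNat
  let ψ := φ.extendByDistinct (K : Set V)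
  have hχ_le : G.chromaticNumber ≤ c + K.card := by simpa using ψ.colorable.chromaticNumber_le
  have hω : G.cliqueNum < c + K.card := by exact_mod_cast hχω.trans_le hχ_le
  obtain ⟨j | u, hj⟩ := (isClique_union_commonNbrs hK hdense).exists_forall_ne_of_cliqueNum_lt ψ
    (by simpa using hω)
  swap
  · exact absurd (φ.extendByDistinct_apply_of_mem u.2) (hj u (Or.inl u.2))
  have hfree : ∀ v, ψ v = .inl j → ∃ a ≠ .inl j, ∀ w, G.Adj v w → ψ w ≠ a := by
    intro v hv
    have hvK : v ∉ (K : Set V) := fun h => by simp [ψ, φ.extendByDistinct_apply_of_mem h] at hv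
    obtain ⟨u, hu⟩ := φ.exists_forall_adj_extendByDistinct_ne_inr hvK fun h => hj v (Or.inr h) hv
    exact ⟨.inr u, by simp, hu⟩
  have hcol : G.Colorable (c + K.card - 1) := by simpa using ψ.colorable_card_sub_one _ hfree
  calc G.chromaticNumber - K.card + 1 ≤ c :=
        ENat.sub_add_one_le_of_le_add_sub_one j.pos hcol.chromaticNumber_le
    _ ≤ _ := ENat.natCast_toNat_le_self _
end

section
/- Let G be a finite simple graph with χ(G) > ω(G). Let A and B be cliques of G with 2 ≤ |A|, |B| ≤ 3, such that the closed neighborhoods C̄(A) and C̄(B) are disjoint, and the union C̄(A) ∪ C̄(B) contains no stable set of size 3. Then at least one of A, B is Tihany, i.e., χ(G \ A) ≥ χ(G) − |A| + 1 or χ(G \ B) ≥ χ(G) − |B| + 1. -/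
open SimpleGraph

/-- The closed neighborhood of a clique. -/
def closedNbrs {V : Type*} (G : SimpleGraph V) (K : Set V) : Set V :=
  K ∪ commonNbrs G K

/-- A triad (stable set of size 3) inside a set of vertices. -/
def HasTriad {V : Type*} (G : SimpleGraph V) (s : Set V) : Prop :=
  ∃ a b c, a ∈ s ∧ b ∈ s ∧ c ∈ s ∧ a ≠ b ∧ a ≠ c ∧ b ≠ c ∧
    ¬ G.Adj a b ∧ ¬ G.Adj a c ∧ ¬ G.Adj b c

/-- In a coloring of `G - A` with `k - |A|` colors (when `G` is not `(k-1)`-colorable),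
every color class contains a common neighbor of `A`; hence `C(A)` has at least
`k - |A|` vertices. -/
private lemma core_meets {V : Type*} [Fintype V] (G : SimpleGraph V) (k : ℕ)
    (A CA : Finset V)
    (hCA : ∀ x, x ∈ CA ↔ x ∈ commonNbrs G (↑A : Set V))
    (hknot : ¬ G.Colorable (k - 1)) (hAk : A.card < k)
    (c : (G.induce ((↑A : Set V)ᶜ)).Coloring (Fin (k - A.card))) :
    k - A.card ≤ CA.card := by
  classical
  have hmem : ∀ x : V, x ∉ A → x ∈ ((↑A : Set V)ᶜ) := by
    intro x hx; simpa using hx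
  have F2 : ∀ i : Fin (k - A.card),
      ∃ x : V, x ∈ CA ∧ ∃ hx : x ∈ ((↑A : Set V)ᶜ), c ⟨x, hx⟩ = i := by
    by_contra hbad
    push_neg at hbad
    obtain ⟨i, hi⟩ := hbad
    apply hknot
    have hsel : ∀ v : V, ∀ hv : v ∈ ((↑A : Set V)ᶜ), c ⟨v, hv⟩ = i →
        ∃ a, a ∈ A ∧ ¬ G.Adj v a := by
      intro v hv hci
      by_contra hno
      push_neg at hno
      have hv' : v ∈ commonNbrs G (↑A : Set V) := by
        refine ⟨by simpa using hv, fun u hu => hno u (by simpa using hu)⟩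
      exact hi v ((hCA v).mpr hv') hv hci
    choose f hfA hfn using hsel
    have CC : G.Coloring ({j : Fin (k - A.card) // j ≠ i} ⊕ {a : V // a ∈ A}) := by
      refine Coloring.mk (fun v =>
        if hv : v ∈ A then Sum.inr ⟨v, hv⟩ else
        if hj : c ⟨v, hmem v hv⟩ = i then Sum.inr ⟨f v (hmem v hv) hj, hfA _ _ hj⟩
        else Sum.inl ⟨c ⟨v, hmem v hv⟩, hj⟩) ?_
      intro v w hadj
      beta_reduce
      have hne : v ≠ w := hadj.ne
      have hcvw : ∀ (hv : v ∉ A) (hw : w ∉ A),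
          c ⟨v, hmem v hv⟩ ≠ c ⟨w, hmem w hw⟩ := by
        intro hv hw
        exact c.valid (by simpa using hadj)
      by_cases hv : v ∈ A
      · rw [dif_pos hv]
        by_cases hw : w ∈ A
        · rw [dif_pos hw]
          simp only [ne_eq, Sum.inr.injEq, Subtype.mk.injEq]
          exact hne
        · rw [dif_neg hw]
          by_cases hcw : c ⟨w, hmem w hw⟩ = i
          · rw [dif_pos hcw]
            simp only [ne_eq, Sum.inr.injEq, Subtype.mk.injEq]
            intro h
            exact hfn w (hmem w hw) hcw (h ▸ hadj.symm)
          · rw [dif_neg hcw]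
            simp
      · rw [dif_neg hv]
        by_cases hw : w ∈ A
        · rw [dif_pos hw]
          by_cases hcv : c ⟨v, hmem v hv⟩ = i
          · rw [dif_pos hcv]
            simp only [ne_eq, Sum.inr.injEq, Subtype.mk.injEq]
            intro h
            exact hfn v (hmem v hv) hcv (h ▸ hadj)
          · rw [dif_neg hcv]
            simp
        · rw [dif_neg hw]
          by_cases hcv : c ⟨v, hmem v hv⟩ = i
          · by_cases hcw : c ⟨w, hmem w hw⟩ = i
            · exact absurd (hcv.trans hcw.symm) (hcvw hv hw)
            · rw [dif_pos hcv, dif_neg hcw]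
              simp
          · rw [dif_neg hcv]
            by_cases hcw : c ⟨w, hmem w hw⟩ = i
            · rw [dif_pos hcw]
              simp
            · rw [dif_neg hcw]
              simp only [ne_eq, Sum.inl.injEq, Subtype.mk.injEq]
              exact hcvw hv hw
    have hcard : Fintype.card ({j : Fin (k - A.card) // j ≠ i} ⊕ {a : V // a ∈ A})
        = (k - A.card - 1) + A.card := by
      simp [Fintype.card_sum, Fintype.card_subtype_compl, Fintype.card_subtype_eq,
        Fintype.card_fin, Fintype.card_coe]
    have := CC.colorable
    rw [hcard] at this
    exact this.mono (by omega)
  choose g hg1 hg2 hg3 using F2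
  have hle : (Finset.univ : Finset (Fin (k - A.card))).card ≤ CA.card := by
    refine Finset.card_le_card_of_injOn g (fun i _ => hg1 i) ?_
    intro i _ j _ hij
    have : c ⟨g i, hg2 i⟩ = c ⟨g j, hg2 j⟩ := by
      congr 1
      exact Subtype.ext hij
    rw [hg3 i, hg3 j] at this
    exact this
  simpa using hle

/-- Counting bound: a set `D` of vertices avoiding `A`, with no three pairwise
nonadjacent members, has at most `2n` vertices if `G - A` is `n`-colorable. -/
private lemma core_bound {V : Type*} [Fintype V] (G : SimpleGraph V) (n : ℕ)
    (A D : Finset V) (hDA : ∀ x ∈ D, x ∉ A)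
    (hD3 : ∀ x ∈ D, ∀ y ∈ D, ∀ z ∈ D, x ≠ y → x ≠ z → y ≠ z →
      G.Adj x y ∨ G.Adj x z ∨ G.Adj y z)
    (c : (G.induce ((↑A : Set V)ᶜ)).Coloring (Fin n)) :
    D.card ≤ 2 * n := by
  classical
  have hmem : ∀ x : V, x ∉ A → x ∈ ((↑A : Set V)ᶜ) := by
    intro x hx; simpa using hx
  rcases Nat.eq_zero_or_pos n with rfl | hn
  · have hD : D = ∅ := by
      rw [Finset.eq_empty_iff_forall_notMem]
      intro x hx
      exact (c ⟨x, hmem x (hDA x hx)⟩).elim0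
    simp [hD]
  · have hf : ∀ v : V, ∃ b : Fin n, ∀ hv : v ∉ A, c ⟨v, hmem v hv⟩ = b := by
      intro v
      by_cases hv : v ∈ A
      · exact ⟨⟨0, hn⟩, fun h => absurd hv h⟩
      · exact ⟨c ⟨v, hmem v hv⟩, fun _ => rfl⟩
    choose f hfc using hf
    have hnadj : ∀ u w : V, u ∈ D → w ∈ D → f u = f w → u ≠ w → ¬ G.Adj u w := by
      intro u w hu hw hfe hne hadj
      have h1 := hfc u (hDA u hu)
      have h2 := hfc w (hDA w hw)
      have : c ⟨u, hmem u (hDA u hu)⟩ = c ⟨w, hmem w (hDA w hw)⟩ := by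
        rw [h1, h2, hfe]
      exact c.valid (by simpa using hadj) this
    have hfib : ∀ b ∈ D.image f, (D.filter fun x => f x = b).card ≤ 2 := by
      intro b _
      by_contra h
      have h3 : 2 < (D.filter fun x => f x = b).card := by omega
      obtain ⟨x, y, z, hx, hy, hz, hxy, hxz, hyz⟩ := Finset.two_lt_card_iff.mp h3
      simp only [Finset.mem_filter] at hx hy hz
      rcases hD3 x hx.1 y hy.1 z hz.1 hxy hxz hyz with h' | h' | h'
      · exact hnadj x y hx.1 hy.1 (hx.2.trans hy.2.symm) hxy h'
      · exact hnadj x z hx.1 hz.1 (hx.2.trans hz.2.symm) hxz h'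
      · exact hnadj y z hy.1 hz.1 (hy.2.trans hz.2.symm) hyz h'
    calc D.card ≤ 2 * (D.image f).card := Finset.card_le_mul_card_image D 2 hfib
      _ ≤ 2 * n := by
        have h1 : (D.image f).card ≤ n := by
          have := Finset.card_le_univ (D.image f)
          simpa using this
        omega

/-- If `χ(G) > ω(G)`, `A`, `B` are cliques of size 2 or 3 whose closed neighborhoods are
disjoint and whose union of closed neighborhoods contains no triad, then one of `A`, `B`
is Tihany. -/
theorem stmt3 {V : Type*} [Fintype V] (G : SimpleGraph V)
    (hχω : (G.cliqueNum : ℕ∞) < G.chromaticNumber)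
    (A B : Finset V) (hA : G.IsClique (↑A : Set V)) (hB : G.IsClique (↑B : Set V))
    (hA2 : 2 ≤ A.card) (hA3 : A.card ≤ 3) (hB2 : 2 ≤ B.card) (hB3 : B.card ≤ 3)
    (hdisj : closedNbrs G (↑A : Set V) ∩ closedNbrs G (↑B : Set V) = ∅)
    (htriad : ¬ HasTriad G (closedNbrs G (↑A : Set V) ∪ closedNbrs G (↑B : Set V))) :
    G.chromaticNumber - (A.card : ℕ∞) + 1 ≤ (G.induce ((↑A : Set V)ᶜ)).chromaticNumber ∨
    G.chromaticNumber - (B.card : ℕ∞) + 1 ≤ (G.induce ((↑B : Set V)ᶜ)).chromaticNumber := by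
  classical
  by_contra hcon
  push_neg at hcon
  obtain ⟨h1, h2⟩ := hcon
  -- `χ(G)` is a finite natural number `k`.
  have hfin : G.chromaticNumber ≠ ⊤ :=
    chromaticNumber_ne_top_iff_exists.mpr ⟨_, G.colorable_of_fintype⟩
  set k := G.chromaticNumber.toNat with hkdef
  have hk : (k : ℕ∞) = G.chromaticNumber := ENat.coe_toNat hfin
  -- basic size facts
  have hωk : G.cliqueNum < k := by
    rw [← hk] at hχω
    exact ENat.coe_lt_coe.mp hχω
  have hAk : A.card < k := lt_of_le_of_lt (hA.card_le_cliqueNum) hωk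
  have hBk : B.card < k := lt_of_le_of_lt (hB.card_le_cliqueNum) hωk
  -- `G` is not `(k-1)`-colorable
  have hknot : ¬ G.Colorable (k - 1) := by
    intro h
    have h' := chromaticNumber_le_iff_colorable.mpr h
    rw [← hk] at h'
    have : k ≤ k - 1 := ENat.coe_le_coe.mp h'
    omega
  -- extract colorings from the negated conclusion
  have hcolor : ∀ (C : Finset V), C.card < k →
      (G.induce ((↑C : Set V)ᶜ)).chromaticNumber < G.chromaticNumber - (C.card : ℕ∞) + 1 →
      Nonempty ((G.induce ((↑C : Set V)ᶜ)).Coloring (Fin (k - C.card))) := by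
    intro C hCk hC
    haveI : Fintype ((↑C : Set V)ᶜ : Set V) := Fintype.ofFinite _
    have hfinC : (G.induce ((↑C : Set V)ᶜ)).chromaticNumber ≠ ⊤ :=
      chromaticNumber_ne_top_iff_exists.mpr ⟨_, (G.induce _).colorable_of_fintype⟩
    set m := (G.induce ((↑C : Set V)ᶜ)).chromaticNumber.toNat with hmdef
    have hm : (m : ℕ∞) = (G.induce ((↑C : Set V)ᶜ)).chromaticNumber := ENat.coe_toNat hfinC
    rw [← hm, ← hk] at hC
    have hcast : ((k : ℕ∞) - (C.card : ℕ∞) + 1) = ((k - C.card + 1 : ℕ) : ℕ∞) := by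
      rw [← ENat.coe_sub]
      exact_mod_cast rfl
    rw [hcast] at hC
    have hmlt : m < k - C.card + 1 := ENat.coe_lt_coe.mp hC
    have hcol : (G.induce ((↑C : Set V)ᶜ)).Colorable m :=
      chromaticNumber_le_iff_colorable.mp (le_of_eq hm.symm)
    exact hcol.mono (by omega)
  obtain ⟨cA⟩ := hcolor A hAk h1
  obtain ⟨cB⟩ := hcolor B hBk h2
  -- the common-neighbor finsets
  set CA : Finset V := (Set.toFinite (commonNbrs G (↑A : Set V))).toFinset with hCAdef
  set CB : Finset V := (Set.toFinite (commonNbrs G (↑B : Set V))).toFinset with hCBdef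
  have hCAmem : ∀ x, x ∈ CA ↔ x ∈ commonNbrs G (↑A : Set V) := by
    intro x; rw [hCAdef]; exact Set.Finite.mem_toFinset _
  have hCBmem : ∀ x, x ∈ CB ↔ x ∈ commonNbrs G (↑B : Set V) := by
    intro x; rw [hCBdef]; exact Set.Finite.mem_toFinset _
  -- membership in the closed neighborhoods
  have hInA : ∀ x, x ∈ A → x ∈ closedNbrs G (↑A : Set V) := fun x hx =>
    Or.inl (by simpa using hx)
  have hInCA : ∀ x, x ∈ CA → x ∈ closedNbrs G (↑A : Set V) := fun x hx =>
    Or.inr ((hCAmem x).mp hx)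
  have hInB : ∀ x, x ∈ B → x ∈ closedNbrs G (↑B : Set V) := fun x hx =>
    Or.inl (by simpa using hx)
  have hInCB : ∀ x, x ∈ CB → x ∈ closedNbrs G (↑B : Set V) := fun x hx =>
    Or.inr ((hCBmem x).mp hx)
  have hdisj' : ∀ x, x ∈ closedNbrs G (↑A : Set V) → x ∈ closedNbrs G (↑B : Set V) → False := by
    intro x hxa hxb
    have : x ∈ closedNbrs G (↑A : Set V) ∩ closedNbrs G (↑B : Set V) := ⟨hxa, hxb⟩
    rw [hdisj] at this
    exact this
  -- no triad in the union, reformulated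
  have htriad' : ∀ x y z : V,
      x ∈ closedNbrs G (↑A : Set V) ∪ closedNbrs G (↑B : Set V) →
      y ∈ closedNbrs G (↑A : Set V) ∪ closedNbrs G (↑B : Set V) →
      z ∈ closedNbrs G (↑A : Set V) ∪ closedNbrs G (↑B : Set V) →
      x ≠ y → x ≠ z → y ≠ z → G.Adj x y ∨ G.Adj x z ∨ G.Adj y z := by
    intro x y z hx hy hz hxy hxz hyz
    by_contra hno
    push_neg at hno
    exact htriad ⟨x, y, z, hx, hy, hz, hxy, hxz, hyz, hno.1, hno.2.1, hno.2.2⟩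
  -- pairwise disjointness of CA, B, CB (and they avoid A)
  have hCAnotA : ∀ x ∈ CA, x ∉ A := by
    intro x hx hxA
    exact ((hCAmem x).mp hx).1 (by simpa using hxA)
  have hBnotA : ∀ x ∈ B, x ∉ A := by
    intro x hx hxA
    exact hdisj' x (hInA x hxA) (hInB x hx)
  have hCBnotA : ∀ x ∈ CB, x ∉ A := by
    intro x hx hxA
    exact hdisj' x (hInA x hxA) (hInCB x hx)
  have hCBnotB : ∀ x ∈ CB, x ∉ B := by
    intro x hx hxB
    exact ((hCBmem x).mp hx).1 (by simpa using hxB)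
  have hAnotB : ∀ x ∈ A, x ∉ B := by
    intro x hx hxB
    exact hdisj' x (hInA x hx) (hInB x hxB)
  have hCAnotB : ∀ x ∈ CA, x ∉ B := by
    intro x hx hxB
    exact hdisj' x (hInCA x hx) (hInB x hxB)
  have hCAnotCB : ∀ x ∈ CA, x ∉ CB := by
    intro x hx hxB
    exact hdisj' x (hInCA x hx) (hInCB x hxB)
  have hBnotCB : ∀ x ∈ B, x ∉ CB := by
    intro x hx hxB
    exact ((hCBmem x).mp hxB).1 (by simpa using hx)
  -- lower bounds on |CA| and |CB|
  have m1 : k - A.card ≤ CA.card := core_meets G k A CA hCAmem hknot hAk cA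
  have m2 : k - B.card ≤ CB.card := core_meets G k B CB hCBmem hknot hBk cB
  -- the union D = CA ∪ B ∪ CB
  have hdisj1 : Disjoint CA B := Finset.disjoint_left.mpr hCAnotB
  have hdisj2 : Disjoint (CA ∪ B) CB := by
    rw [Finset.disjoint_left]
    intro x hx
    rcases Finset.mem_union.mp hx with h | h
    · exact hCAnotCB x h
    · exact hBnotCB x h
  have hDcard : (CA ∪ B ∪ CB).card = CA.card + B.card + CB.card := by
    rw [Finset.card_union_of_disjoint hdisj2, Finset.card_union_of_disjoint hdisj1]
  have hDA : ∀ x ∈ CA ∪ B ∪ CB, x ∉ A := by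
    intro x hx
    rcases Finset.mem_union.mp hx with h | h
    · rcases Finset.mem_union.mp h with h' | h'
      · exact hCAnotA x h'
      · exact hBnotA x h'
    · exact hCBnotA x h
  have hDU : ∀ x ∈ CA ∪ B ∪ CB,
      x ∈ closedNbrs G (↑A : Set V) ∪ closedNbrs G (↑B : Set V) := by
    intro x hx
    rcases Finset.mem_union.mp hx with h | h
    · rcases Finset.mem_union.mp h with h' | h'
      · exact Or.inl (hInCA x h')
      · exact Or.inr (hInB x h')
    · exact Or.inr (hInCB x h)
  have b1 : (CA ∪ B ∪ CB).card ≤ 2 * (k - A.card) := by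
    refine core_bound G (k - A.card) A (CA ∪ B ∪ CB) hDA ?_ cA
    intro x hx y hy z hz hxy hxz hyz
    exact htriad' x y z (hDU x hx) (hDU y hy) (hDU z hz) hxy hxz hyz
  rw [hDcard] at b1
  omega
end

section
/- Let G be a finite simple claw-free graph and K a clique such that α(G \ K) ≤ 2 and such that no clique of size at most |K|+1 is Tihany. Then χ(G) = |V(G)| − μ(G^c), where G^c is the complement of G and μ denotes the maximum matching number. -/
open SimpleGraph

/-- A graph is claw-free if it has no induced `K_{1,3}`. -/
def ClawFree {V : Type*} (G : SimpleGraph V) : Prop :=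
  ¬ ∃ u a b c : V, a ≠ b ∧ a ≠ c ∧ b ≠ c ∧
    G.Adj u a ∧ G.Adj u b ∧ G.Adj u c ∧ ¬ G.Adj a b ∧ ¬ G.Adj a c ∧ ¬ G.Adj b c

/-- The maximum matching number of a graph. -/
noncomputable def matchNum {V : Type*} (G : SimpleGraph V) : ℕ :=
  sSup {n | ∃ M : G.Subgraph, M.IsMatching ∧ M.edgeSet.ncard = n}

/-- The stability (independence) number: the clique number of the complement. -/
noncomputable def alphaNum {V : Type*} (G : SimpleGraph V) : ℕ := Gᶜ.cliqueNum

/-!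
A matching `M` of `Gᶜ` partitions `V` into its edges and its unmatched vertices. The
`|V| - |M|` blocks are independent in `G`, so colouring by blocks gives `χ(G) ≤ |V| - μ(Gᶜ)`.
Conversely, in a colouring whose classes have at most two vertices, the two-vertex classes form
a matching of `Gᶜ`, so `|V| ≤ #colours + μ(Gᶜ)`. Since `K` is not Tihany, `G \ K` has a
colouring with `χ(G) - |K|` colours, whose classes have at most `α(G \ K) ≤ 2` vertices; giving
each vertex of `K` a colour of its own yields such a colouring of `G` with `χ(G)` colours.
-/

namespace SimpleGraph.Subgraph.IsMatching

variable {V : Type*} {H : SimpleGraph V} {M : H.Subgraph}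

def setoid (hM : M.IsMatching) : Setoid V where
  r u v := u = v ∨ M.Adj u v
  iseqv :=
    { refl := fun _ => Or.inl rfl
      symm := by
        rintro u v (rfl | h)
        exacts [Or.inl rfl, Or.inr h.symm]
      trans := by
        rintro u v w (rfl | huv) (rfl | hvw)
        · exact Or.inl rfl
        · exact Or.inr hvw
        · exact Or.inr huv
        · exact Or.inl (hM.eq_of_adj_right huv hvw.symm) }

theorem card_quotient_add_ncard_edgeSet [Finite V] (hM : M.IsMatching) :
    Nat.card (Quotient hM.setoid) + M.edgeSet.ncard = Nat.card V := by
  let rep (v : V) : V := (Quotient.mk hM.setoid v).out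
  have rep_rel (v : V) : rep v = v ∨ M.Adj (rep v) v := Quotient.mk_out (s := hM.setoid) v
  have rep_rep (v : V) : rep (rep v) = rep v := by simp only [rep, Quotient.out_eq]
  have rep_eq {u v : V} (h : M.Adj u v) : rep u = rep v :=
    congrArg Quotient.out (Quotient.sound (s := hM.setoid) (Or.inr h))
  have card_reps : (Set.range rep).ncard = Nat.card (Quotient hM.setoid) := by
    rw [show Set.range rep = Set.range Quotient.out from
      (Quotient.mk_surjective.range_comp _), Set.ncard_range_of_injective]
    exact Quotient.out_injective
  have card_nonreps : (Set.range rep)ᶜ.ncard = M.edgeSet.ncard := by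
    have not_rep {v : V} : v ∈ (Set.range rep)ᶜ ↔ rep v ≠ v :=
      ⟨fun hv h => hv ⟨v, h⟩, fun h ⟨u, hu⟩ => h (hu ▸ rep_rep u)⟩
    refine Set.ncard_congr (fun v _ => s(v, rep v)) (fun v hv => ?_) (fun v w hv hw h => ?_)
      (fun e he => ?_)
    · exact ((rep_rel v).resolve_left (not_rep.mp hv)).symm
    · rcases Sym2.eq_iff.mp h with ⟨h, -⟩ | ⟨rfl, -⟩
      · exact h
      · exact absurd (rep_rep w) (not_rep.mp hv)
    · induction e with | _ a b => ?_
      have hab : M.Adj a b := he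
      rcases (rep_rel a).imp_right (hM.eq_of_adj_right · hab.symm) with ha | ha
      · have hb : rep b = a := (rep_eq hab).symm.trans ha
        exact ⟨b, not_rep.mpr (hb ▸ hab.ne), by rw [hb, Sym2.eq_swap]⟩
      · exact ⟨a, not_rep.mpr (ha ▸ hab.ne.symm), by rw [ha]⟩
  rw [← card_reps, ← card_nonreps, Set.ncard_add_ncard_compl]

end SimpleGraph.Subgraph.IsMatching

namespace SimpleGraph

variable {V α : Type*} {G H : SimpleGraph V}

theorem bddAbove_ncard_edgeSet_isMatching [Finite V] (H : SimpleGraph V) :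
    BddAbove {n | ∃ M : H.Subgraph, M.IsMatching ∧ M.edgeSet.ncard = n} := by
  refine ⟨Nat.card (Sym2 V), ?_⟩
  rintro n ⟨M, -, rfl⟩
  exact Set.ncard_le_card _

theorem Subgraph.IsMatching.ncard_edgeSet_le_matchNum [Finite V] {M : H.Subgraph}
    (hM : M.IsMatching) : M.edgeSet.ncard ≤ matchNum H :=
  le_csSup (bddAbove_ncard_edgeSet_isMatching H) ⟨M, hM, rfl⟩

theorem exists_isMatching_ncard_edgeSet_eq_matchNum [Finite V] (H : SimpleGraph V) :
    ∃ M : H.Subgraph, M.IsMatching ∧ M.edgeSet.ncard = matchNum H := by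
  refine Nat.sSup_mem ?_ (bddAbove_ncard_edgeSet_isMatching H)
  exact ⟨0, ⊥, fun _ hv => hv.elim, by simp⟩

theorem Subgraph.IsMatching.colorable_card_sub_ncard_edgeSet [Finite V] {M : Gᶜ.Subgraph}
    (hM : M.IsMatching) : G.Colorable (Nat.card V - M.edgeSet.ncard) := by
  have := Fintype.ofFinite (Quotient hM.setoid)
  let C : G.Coloring (Quotient hM.setoid) := Coloring.mk (Quotient.mk _) fun {u v} huv h =>
    (Quotient.exact h).elim huv.ne fun h => (M.adj_sub h).2 huv
  convert C.colorable using 1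
  rw [← Nat.card_eq_fintype_card, ← hM.card_quotient_add_ncard_edgeSet, Nat.add_sub_cancel]

theorem chromaticNumber_le_card_sub_matchNum_compl [Fintype V] (G : SimpleGraph V) :
    G.chromaticNumber ≤ (Fintype.card V - matchNum Gᶜ : ℕ) := by
  obtain ⟨M, hM, hcard⟩ := exists_isMatching_ncard_edgeSet_eq_matchNum Gᶜ
  rw [← hcard, ← Nat.card_eq_fintype_card]
  exact hM.colorable_card_sub_ncard_edgeSet.chromaticNumber_le

namespace Coloring

def sameColorMatching (C : G.Coloring α) : Gᶜ.Subgraph where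
  verts := {v | ∃ w, v ≠ w ∧ C v = C w}
  Adj u v := u ≠ v ∧ C u = C v
  adj_sub h := ⟨h.1, fun huv => C.valid huv h.2⟩
  edge_vert h := ⟨_, h⟩
  symm := ⟨fun _ _ h => ⟨h.1.symm, h.2.symm⟩⟩

theorem isMatching_sameColorMatching [Finite V] (C : G.Coloring α)
    (hC : ∀ c, (C.colorClass c).ncard ≤ 2) : C.sameColorMatching.IsMatching := by
  rintro v ⟨w, hvw, hw⟩
  refine ⟨w, ⟨hvw, hw⟩, fun u ⟨hvu, hu⟩ => ?_⟩
  by_contra huw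
  exact (hC (C v)).not_gt
    ((Set.two_lt_ncard_iff).mpr ⟨v, u, w, rfl, hu.symm, hw.symm, hvu, hvw, huw⟩)

theorem card_le_card_add_matchNum_compl [Fintype V] [Finite α] (C : G.Coloring α)
    (hC : ∀ c, (C.colorClass c).ncard ≤ 2) :
    Fintype.card V ≤ Nat.card α + matchNum Gᶜ := by
  have hM := C.isMatching_sameColorMatching hC
  have hcolor : Nat.card (Quotient hM.setoid) ≤ Nat.card α := by
    refine Nat.card_le_card_of_injective (Quotient.lift C ?_) ?_
    · rintro u v (rfl | h)
      exacts [rfl, h.2]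
    · refine Quotient.ind₂ fun u v h => Quotient.sound ?_
      by_cases huv : u = v
      exacts [Or.inl huv, Or.inr ⟨huv, h⟩]
  have hpartition := hM.card_quotient_add_ncard_edgeSet
  have hmatching := hM.ncard_edgeSet_le_matchNum
  rw [← Nat.card_eq_fintype_card]
  omega

theorem ncard_colorClass_le_indepNum [Finite V] (C : G.Coloring α) (c : α) :
    (C.colorClass c).ncard ≤ G.indepNum := by
  have := Fintype.ofFinite V
  classical
  rw [Set.ncard_eq_toFinset_card']
  exact IsIndepSet.card_le_indepNum (by simpa using C.isIndepSet_colorClass c)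

open Classical in
noncomputable def sumInduceCompl (K : Set V) (C : (G.induce Kᶜ).Coloring α) :
    G.Coloring (K ⊕ α) :=
  .mk (fun v => if h : v ∈ K then .inl ⟨v, h⟩ else .inr (C ⟨v, h⟩)) fun {u v} huv h => by
    by_cases hu : u ∈ K <;> by_cases hv : v ∈ K <;> simp only [hu, hv, dite_true, dite_false,
      Sum.inl.injEq, Sum.inr.injEq, reduceCtorEq, Subtype.mk.injEq] at h
    · exact huv.ne h
    · exact C.valid (by simpa using huv) h

theorem sumInduceCompl_apply_of_mem {K : Set V} (C : (G.induce Kᶜ).Coloring α) {v : V}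
    (hv : v ∈ K) : C.sumInduceCompl K v = .inl ⟨v, hv⟩ :=
  dif_pos hv

theorem sumInduceCompl_apply_of_notMem {K : Set V} (C : (G.induce Kᶜ).Coloring α) {v : V}
    (hv : v ∉ K) : C.sumInduceCompl K v = .inr (C ⟨v, hv⟩) :=
  dif_neg hv

theorem ncard_colorClass_sumInduceCompl_inr_le [Finite V] {K : Set V}
    (C : (G.induce Kᶜ).Coloring α) (c : α) :
    ((C.sumInduceCompl K).colorClass (.inr c)).ncard ≤ (G.induce Kᶜ).indepNum := by
  have hsub : (C.sumInduceCompl K).colorClass (.inr c) ⊆ Subtype.val '' C.colorClass c := by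
    intro v hv
    by_cases hvK : v ∈ K
    · simp [colorClass, C.sumInduceCompl_apply_of_mem hvK] at hv
    · simp only [colorClass, Set.mem_ofPred_eq, C.sumInduceCompl_apply_of_notMem hvK,
        Sum.inr.injEq] at hv
      exact ⟨⟨v, hvK⟩, hv, rfl⟩
  calc _ ≤ (Subtype.val '' C.colorClass c).ncard := Set.ncard_le_ncard hsub
    _ ≤ (C.colorClass c).ncard := Set.ncard_image_le
    _ ≤ _ := C.ncard_colorClass_le_indepNum c

end Coloring

theorem card_le_card_add_matchNum_compl_of_colorable_induce_compl [Fintype V] (K : Finset V)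
    (hα : (G.induce (↑K)ᶜ).indepNum ≤ 2) {k : ℕ} (hk : (G.induce (↑K)ᶜ).Colorable k) :
    Fintype.card V ≤ K.card + k + matchNum Gᶜ := by
  obtain ⟨C⟩ := hk
  let C' := C.sumInduceCompl (K : Set V)
  have hclass (c : ↥(K : Set V) ⊕ Fin k) : (C'.colorClass c).ncard ≤ 2 := by
    rcases c with ⟨w, hw⟩ | c
    · refine (Set.ncard_le_ncard (t := {w}) fun v hv => ?_).trans (by simp)
      by_cases hvK : v ∈ (K : Set V)
      · simpa [Coloring.colorClass, C', C.sumInduceCompl_apply_of_mem hvK] using hv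
      · simp [Coloring.colorClass, C', C.sumInduceCompl_apply_of_notMem hvK] at hv
    · exact (C.ncard_colorClass_sumInduceCompl_inr_le c).trans hα
  simpa using C'.card_le_card_add_matchNum_compl hclass

end SimpleGraph

theorem stmt6_general {V : Type*} [Fintype V] (G : SimpleGraph V)
    (K : Finset V) (hK : G.IsClique (↑K : Set V))
    (hα : alphaNum (G.induce ((↑K : Set V)ᶜ)) ≤ 2)
    (hnoT : ∀ T : Finset V, G.IsClique (↑T : Set V) → T.card ≤ K.card + 1 →
      ¬ (G.chromaticNumber - (T.card : ℕ∞) + 1 ≤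
          (G.induce ((↑T : Set V)ᶜ)).chromaticNumber)) :
    G.chromaticNumber = ((Fintype.card V - matchNum Gᶜ : ℕ) : ℕ∞) := by
  obtain ⟨c, hc⟩ := ENat.ne_top_iff_exists.mp
    (ne_top_of_le_ne_top (ENat.natCast_ne_top _) G.chromaticNumber_le_card)
  replace hc := hc.symm
  have hKc : K.card ≤ c := by exact_mod_cast hc ▸ hK.card_le_chromaticNumber
  have hcol : (G.induce (↑K)ᶜ).Colorable (c - K.card) := by
    have hlt := not_le.mp (hnoT K hK K.card.le_succ)
    rw [hc, ← ENat.natCast_sub, ENat.lt_add_one_iff (ENat.natCast_ne_top _)] at hlt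
    exact chromaticNumber_le_iff_colorable.mp hlt
  have hlower := card_le_card_add_matchNum_compl_of_colorable_induce_compl K
    (by simpa [alphaNum] using hα) hcol
  have hupper := hc ▸ chromaticNumber_le_card_sub_matchNum_compl G
  rw [Nat.cast_le] at hupper
  rw [hc, Nat.cast_inj]
  omega

/-- Claim 1 of Theorem 5.4: if `G` is claw-free with `χ(G) > ω(G)`, `K` is a clique
with `α(G \ K) ≤ 2`, and no clique of size at most `|K| + 1` is Tihany, then
`χ(G) = |V(G)| - μ(Gᶜ)`. -/
theorem stmt6 {V : Type*} [Fintype V] (G : SimpleGraph V) (hcf : ClawFree G)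
    (hχω : (G.cliqueNum : ℕ∞) < G.chromaticNumber)
    (K : Finset V) (hK : G.IsClique (↑K : Set V))
    (hα : alphaNum (G.induce ((↑K : Set V)ᶜ)) ≤ 2)
    (hnoT : ∀ T : Finset V, G.IsClique (↑T : Set V) → T.card ≤ K.card + 1 →
      ¬ (G.chromaticNumber - (T.card : ℕ∞) + 1 ≤
          (G.induce ((↑T : Set V)ᶜ)).chromaticNumber)) :
    G.chromaticNumber = ((Fintype.card V - matchNum Gᶜ : ℕ) : ℕ∞) :=
  stmt6_general G K hK hα hnoT
end

section
/- Let G be a graph obtained as the icosahedron graph (12 vertices, 5-regular, planar) possibly with each vertex v blown up into a nonempty clique X_v (adjacent blown-up classes fully joined, nonadjacent ones fully non-joined). If χ(G) > ω(G), then there exist adjacent vertices x, y in G with χ(G \ {x,y}) ≥ χ(G) − 1. -/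
open SimpleGraph

/-- The edges of the icosahedron on vertices `v_0, …, v_11`. -/
def icoEdges : List (Fin 12 × Fin 12) :=
  [(1,2),(2,3),(3,4),(4,5),(5,6),(6,7),(7,8),(8,9),(9,10),(10,1),
   (1,3),(2,4),(3,5),(4,6),(5,7),(6,8),(7,9),(8,10),(9,1),(10,2),
   (0,1),(0,3),(0,5),(0,7),(0,9),
   (11,2),(11,4),(11,6),(11,8),(11,10)]

/-- The icosahedron graph. -/
def icosahedron : SimpleGraph (Fin 12) where
  Adj a b := a ≠ b ∧ ((a, b) ∈ icoEdges ∨ (b, a) ∈ icoEdges)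
  symm := ⟨fun a b h => ⟨h.1.symm, h.2.symm⟩⟩
  loopless := ⟨fun a h => h.1 rfl⟩


/-!
Let `k = χ(G)` and suppose that `G - x - y` is `(k-2)`-colourable for every edge `xy`.
Since `α(G) ≤ 3`, a `(k-2)`-colouring of `G - x - y` covers at most `3(k-2)` vertices, so
`|V| ≤ 3k - 4`. On the other hand, every colour class of such a colouring must contain a common
neighbour of `x` and `y`, for otherwise recolouring yields a `(k-1)`-colouring of `G`.
For an edge `uv` of the icosahedron with `x ∈ X_u`, `y ∈ X_v`, these common neighbours lie in the
cliques over `u`, `v` and the apexes of the two triangles on `uv`, whence these four cliques have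
at least `k` vertices in total. Every vertex of the icosahedron occurs in exactly ten of these
quadruples, so summing over the thirty edges gives `10 |V| ≥ 30 k`, a contradiction.
-/

open Finset

instance : DecidableRel icosahedron.Adj := fun a b =>
  decidable_of_iff (a ≠ b ∧ ((a, b) ∈ icoEdges ∨ (b, a) ∈ icoEdges)) Iff.rfl

namespace SimpleGraph

variable {V W : Type*} {G : SimpleGraph V} {H : SimpleGraph W}

theorem CliqueFree.of_hom (φ : G →g H) {n : ℕ} (h : H.CliqueFree n) : G.CliqueFree n := by
  classical
  rintro s ⟨hs, rfl⟩
  have hinj : Set.InjOn φ s := fun a ha b hb hab =>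
    by_contra fun hne => (φ.map_adj (hs ha hb hne)).ne hab
  refine h (s.image φ) ⟨?_, card_image_of_injOn hinj⟩
  rw [coe_image]
  rintro _ ⟨a, ha, rfl⟩ _ ⟨b, hb, rfl⟩ hne
  exact φ.map_adj (hs ha hb fun h => hne (h ▸ rfl))

theorem IsIndepSet.card_le_of_indepSetFree {n : ℕ} (hG : G.IndepSetFree (n + 1)) {s : Finset V}
    (hs : G.IsIndepSet (s : Set V)) : #s ≤ n := by
  by_contra! h
  obtain ⟨t, hts, ht⟩ := exists_subset_card_eq (show n + 1 ≤ #s from h)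
  exact hG t ⟨hs.mono (by simpa using hts), ht⟩

theorem card_le_mul_of_colorable [Fintype V] {m n : ℕ} (hG : G.IndepSetFree (m + 1))
    (hc : G.Colorable n) : Fintype.card V ≤ m * n := by
  classical
  obtain ⟨C⟩ := hc
  simpa using card_le_mul_card_image_of_maps_to (s := univ) (t := univ) (f := C)
    (fun _ _ => mem_univ _) m fun c _ => IsIndepSet.card_le_of_indepSetFree hG
      fun a ha b hb _ => C.not_adj_of_mem_colorClass (c := c)
        (by simpa using ha : C a = c) (by simpa using hb : C b = c)

-- `x` takes colour `i`; `y` takes the new colour, shared with the `i`-coloured neighbours of `x`.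
theorem colorable_succ_of_coloring_induce_compl_pair {x y : V} {n : ℕ}
    (C : (G.induce ({x, y} : Set V)ᶜ).Coloring (Fin n)) (i : Fin n)
    (hi : ∀ z (hz : z ∈ ({x, y} : Set V)ᶜ), G.Adj x z → G.Adj y z → C ⟨z, hz⟩ ≠ i) :
    G.Colorable (n + 1) := by
  classical
  let c : V → Option (Fin n) := fun z =>
    if hz : z ∈ ({x, y} : Set V)ᶜ then
      if C ⟨z, hz⟩ = i ∧ G.Adj x z then none else some (C ⟨z, hz⟩)
    else if z = x then some i else none
  have hC : ∀ p q (hp : p ∈ ({x, y} : Set V)ᶜ) (hq : q ∈ ({x, y} : Set V)ᶜ),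
      G.Adj p q → C ⟨p, hp⟩ ≠ C ⟨q, hq⟩ := fun p q hp hq h => C.valid h
  have hvalid : ∀ {p q}, G.Adj p q → c p ≠ c q := by
    intro p q hpq
    simp only [c]
    split_ifs <;> grind [hpq.symm, hpq.ne]
  simpa using (Coloring.mk c hvalid).colorable

theorem le_ncard_commonNeighbors [Finite V] {x y : V} {n : ℕ}
    (hc : (G.induce ({x, y} : Set V)ᶜ).Colorable n) (hG : ¬ G.Colorable (n + 1)) :
    n ≤ (G.commonNeighbors x y).ncard := by
  obtain ⟨C⟩ := hc
  have hmem : ∀ z ∈ G.commonNeighbors x y, z ∈ ({x, y} : Set V)ᶜ := by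
    rintro z ⟨hxz, hyz⟩ (rfl | rfl)
    exacts [hxz.ne rfl, hyz.ne rfl]
  let g : G.commonNeighbors x y → Fin n := fun z => C ⟨z, hmem z z.2⟩
  have hg : Function.Surjective g := by
    intro i
    by_contra! h
    exact hG (colorable_succ_of_coloring_induce_compl_pair C i
      fun z hz hxz hyz => h ⟨z, hxz, hyz⟩)
  simpa using Nat.card_le_card_of_surjective g hg

theorem colorable_sub_two_of_chromaticNumber_lt_sub_one {k : ℕ}
    (h : G.chromaticNumber < (k : ℕ∞) - 1) : 2 ≤ k ∧ G.Colorable (k - 2) := by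
  obtain _ | _ | k := k
  · simp at h
  · simp at h
  · refine ⟨by omega, chromaticNumber_le_iff_colorable.mp ?_⟩
    have : ((k + 1 + 1 : ℕ) : ℕ∞) - 1 = k + 1 := by norm_cast
    simpa using Order.le_of_lt_add_one (h.trans_eq this)

def IsThickening (G : SimpleGraph V) (H : SimpleGraph W) (f : V → W) : Prop :=
  ∀ u v, G.Adj u v ↔ u ≠ v ∧ (f u = f v ∨ H.Adj (f u) (f v))

def closedCommonNeighborFinset (H : SimpleGraph W) [Fintype W] [DecidableEq W]
    [DecidableRel H.Adj] (u v : W) : Finset W :=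
  {t | (t = u ∨ H.Adj u t) ∧ (t = v ∨ H.Adj v t)}

@[simp]
theorem mem_closedCommonNeighborFinset [Fintype W] [DecidableEq W] [DecidableRel H.Adj]
    {t u v : W} :
    t ∈ H.closedCommonNeighborFinset u v ↔ (t = u ∨ H.Adj u t) ∧ (t = v ∨ H.Adj v t) := by
  simp [closedCommonNeighborFinset]

namespace IsThickening

variable {f : V → W}

theorem adj_of_adj (hG : G.IsThickening H f) {x y : V} (h : H.Adj (f x) (f y)) : G.Adj x y :=
  (hG x y).2 ⟨fun hxy => h.ne (congrArg f hxy), Or.inr h⟩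

theorem induce (hG : G.IsThickening H f) (s : Set V) :
    (G.induce s).IsThickening H (f ∘ (↑)) := fun u v => by
  simpa [Subtype.ext_iff] using hG u v

def complHom (hG : G.IsThickening H f) : Gᶜ →g Hᶜ where
  toFun := f
  map_rel' {u v} h := by
    rw [compl_adj] at h ⊢
    have := hG u v
    tauto

theorem indepSetFree (hG : G.IsThickening H f) {n : ℕ} (hH : H.IndepSetFree n) :
    G.IndepSetFree n := by
  rw [← cliqueFree_compl] at hH ⊢
  exact hH.of_hom hG.complHom

theorem card_le_of_colorable_induce_compl_pair [Fintype V] (hG : G.IsThickening H f) {m n : ℕ}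
    (hH : H.IndepSetFree (m + 1)) {x y : V} (hxy : x ≠ y)
    (hc : (G.induce ({x, y} : Set V)ᶜ).Colorable n) : Fintype.card V ≤ m * n + 2 := by
  classical
  have := card_le_mul_of_colorable ((hG.induce _).indepSetFree hH) hc
  rw [Fintype.card_compl_set, Set.card_insert _ (by simpa using hxy),
    Set.card_singleton] at this
  omega

theorem ncard_commonNeighbors_add_two_le [Fintype V] [Fintype W] [DecidableEq W]
    [DecidableRel H.Adj] (hG : G.IsThickening H f) {x y : V} (hxy : G.Adj x y) :
    (G.commonNeighbors x y).ncard + 2 ≤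
      ∑ t ∈ H.closedCommonNeighborFinset (f x) (f y), #{z | f z = t} := by
  classical
  set P : Finset V := {z | f z ∈ H.closedCommonNeighborFinset (f x) (f y)}
  have hsub : G.commonNeighbors x y ⊆ ↑(P \ {x, y}) := by
    rintro z ⟨hxz, hyz⟩
    obtain ⟨hxz, hfxz⟩ := (hG x z).1 hxz
    obtain ⟨hyz, hfyz⟩ := (hG y z).1 hyz
    simp only [P, coe_sdiff, coe_filter, coe_pair, mem_univ, true_and, Set.mem_sdiff,
      Set.mem_ofPred_eq, mem_closedCommonNeighborFinset, Set.mem_insert_iff,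
      Set.mem_singleton_iff, not_or]
    exact ⟨⟨hfxz.imp_left Eq.symm, hfyz.imp_left Eq.symm⟩, Ne.symm hxz, Ne.symm hyz⟩
  have hxyP : {x, y} ⊆ P := by
    obtain ⟨-, hf⟩ := (hG x y).1 hxy
    rw [insert_subset_iff, singleton_subset_iff]
    exact ⟨mem_filter.2 ⟨mem_univ _, mem_closedCommonNeighborFinset.2
        ⟨Or.inl rfl, hf.imp id Adj.symm⟩⟩,
      mem_filter.2 ⟨mem_univ _, mem_closedCommonNeighborFinset.2
        ⟨hf.imp_left Eq.symm, Or.inl rfl⟩⟩⟩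
  calc (G.commonNeighbors x y).ncard + 2 ≤ #(P \ {x, y}) + 2 := by
        grw [Set.ncard_le_ncard hsub, Set.ncard_coe_finset]
    _ = #P := by
        have := card_le_card hxyP
        rw [card_sdiff_of_subset hxyP, card_pair hxy.ne] at *
        omega
    _ = _ := (sum_card_fiberwise_eq_card_filter _ _ _).symm

end IsThickening

end SimpleGraph

theorem icosahedron_indepSetFree : icosahedron.IndepSetFree 4 := by
  -- Nested conjunctions let `decide` prune early; deciding over all finsets is far too slow.
  have key : ∀ a b c d : Fin 12, ¬ (a ≠ b ∧ ¬ icosahedron.Adj a b ∧ a ≠ c ∧ ¬ icosahedron.Adj a c ∧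
      b ≠ c ∧ ¬ icosahedron.Adj b c ∧ a ≠ d ∧ ¬ icosahedron.Adj a d ∧ b ≠ d ∧
      ¬ icosahedron.Adj b d ∧ c ≠ d ∧ ¬ icosahedron.Adj c d) := by
    decide
  rintro t ⟨ht, hcard⟩
  obtain ⟨a, b, c, d, hab, hac, had, hbc, hbd, hcd, rfl⟩ := card_eq_four.mp hcard
  exact key a b c d ⟨hab, ht (by simp) (by simp) hab, hac, ht (by simp) (by simp) hac,
    hbc, ht (by simp) (by simp) hbc, had, ht (by simp) (by simp) had,
    hbd, ht (by simp) (by simp) hbd, hcd, ht (by simp) (by simp) hcd⟩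

theorem icosahedron_card_darts : #{p : Fin 12 × Fin 12 | icosahedron.Adj p.1 p.2} = 60 := by
  decide

theorem icosahedron_card_darts_mem_closedCommonNeighborFinset (t : Fin 12) :
    #{p : Fin 12 × Fin 12 | icosahedron.Adj p.1 p.2 ∧
      t ∈ icosahedron.closedCommonNeighborFinset p.1 p.2} = 20 := by
  revert t
  decide

theorem icosahedron_three_mul_le_sum {k : ℕ} (w : Fin 12 → ℕ)
    (h : ∀ u v, icosahedron.Adj u v →
      k ≤ ∑ t ∈ icosahedron.closedCommonNeighborFinset u v, w t) :
    3 * k ≤ ∑ t, w t := by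
  have : 60 * k ≤ 20 * ∑ t, w t := calc
    60 * k = ∑ p : Fin 12 × Fin 12 with icosahedron.Adj p.1 p.2, k := by
      rw [sum_const, icosahedron_card_darts, smul_eq_mul]
    _ ≤ ∑ p : Fin 12 × Fin 12 with icosahedron.Adj p.1 p.2,
          ∑ t ∈ icosahedron.closedCommonNeighborFinset p.1 p.2, w t :=
      sum_le_sum fun p hp => h p.1 p.2 (mem_filter.1 hp).2
    _ = ∑ t, ∑ p : Fin 12 × Fin 12 with icosahedron.Adj p.1 p.2 ∧
          t ∈ icosahedron.closedCommonNeighborFinset p.1 p.2, w t :=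
      sum_comm' fun p t => by simp
    _ = 20 * ∑ t, w t := by
      simp_rw [sum_const, icosahedron_card_darts_mem_closedCommonNeighborFinset, smul_eq_mul,
        mul_sum]
  omega

theorem stmt10_general {V : Type*} [Fintype V] (G : SimpleGraph V)
    (f : V → Fin 12) (hsurj : Function.Surjective f)
    (hadj : ∀ u v : V, G.Adj u v ↔ u ≠ v ∧ (f u = f v ∨ icosahedron.Adj (f u) (f v))) :
    ∃ x y : V, G.Adj x y ∧
      G.chromaticNumber - 1 ≤ (G.induce (({x, y} : Set V)ᶜ)).chromaticNumber := by
  have hG : G.IsThickening icosahedron f := hadj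
  by_contra! hno
  obtain ⟨k, hk⟩ := ENat.ne_top_iff_exists.mp
    (chromaticNumber_ne_top_iff_exists.mpr ⟨_, G.colorable_of_fintype⟩)
  rw [← hk] at hno
  have hbrace (u v : Fin 12) (huv : icosahedron.Adj u v) :
      k ≤ ∑ t ∈ icosahedron.closedCommonNeighborFinset u v, #{z | f z = t} := by
    obtain ⟨x, rfl⟩ := hsurj u
    obtain ⟨y, rfl⟩ := hsurj v
    have hxy := hG.adj_of_adj huv
    obtain ⟨hk2, hcol⟩ := colorable_sub_two_of_chromaticNumber_lt_sub_one (hno x y hxy)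
    have hχ : ¬ G.Colorable (k - 2 + 1) := fun h => by
      have := hk ▸ h.chromaticNumber_le
      norm_cast at this
      omega
    have hcommon := le_ncard_commonNeighbors hcol hχ
    have hclosed := hG.ncard_commonNeighbors_add_two_le hxy
    omega
  have h3k := icosahedron_three_mul_le_sum _ hbrace
  rw [sum_card_fiberwise_eq_card_filter, filter_true_of_mem fun _ _ => mem_univ _, card_univ]
    at h3k
  obtain ⟨x, hx⟩ := hsurj 0
  obtain ⟨y, hy⟩ := hsurj 1
  have hxy : G.Adj x y := hG.adj_of_adj (by rw [hx, hy]; decide)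
  obtain ⟨hk2, hcol⟩ := colorable_sub_two_of_chromaticNumber_lt_sub_one (hno x y hxy)
  have hcard := hG.card_le_of_colorable_induce_compl_pair icosahedron_indepSetFree hxy.ne hcol
  omega

/-- If `G` is a thickening of the icosahedron (each vertex blown up into a nonempty clique)
with `χ(G) > ω(G)`, then there is a Tihany brace in `G`. -/
theorem stmt10 {V : Type*} [Fintype V] (G : SimpleGraph V)
    (f : V → Fin 12) (hsurj : Function.Surjective f)
    (hadj : ∀ u v : V, G.Adj u v ↔ u ≠ v ∧ (f u = f v ∨ icosahedron.Adj (f u) (f v)))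
    (hχω : (G.cliqueNum : ℕ∞) < G.chromaticNumber) :
    ∃ x y : V, G.Adj x y ∧
      G.chromaticNumber - 1 ≤ (G.induce (({x, y} : Set V)ᶜ)).chromaticNumber :=
  stmt10_general G f hsurj hadj
end

section
/- Let G be a finite simple graph with χ(G) > ω(G) and stability number α(G) = 2. Then for any integers s, t ≥ 2 with s + t = χ(G) + 1, there is a partition (S, T) of V(G) such that χ(G|S) ≥ s and χ(G|T) ≥ t. -/
/-!
Write `H = Gᶜ` and `ν X` for the matching number of `H[X]`. As `α(G) = 2`, `H` is triangle-free,
so the colour classes of `G[X]` are edges and single vertices of `H` and `χ(G[X]) = |X| - ν X`.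
It therefore suffices to split any `A` with `α(H[A]) < |A| - ν A` into `S` and `A \ S` with
`|S| - ν S ≥ s` and `|A \ S| - ν (A \ S) ≥ t` whenever `s + t = |A| - ν A + 1`.

This goes by induction on `|A|`. If `|A| ≤ 2 ν A + 1`, a direct choice of `S` works (for
`|A| = 2 ν A + 1` it contains a vertex of small degree together with non-neighbours of it). A vertex
covered by every maximum matching can be deleted and then put back on the side of `A \ S`.
Otherwise, by Gallai's lemma, two vertices missed by a maximum matching lie in different components
of `H[A]`, so `A` splits into two parts `B`, `C` with no edges between them. One of them, say `B`,
inherits the hypothesis and is split by induction; `C` is split without loss, because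
`X ↦ |X| - ν X` takes every value from `0` to `|C| - ν C` on subsets of `C`.
-/

open Finset SimpleGraph

namespace SimpleGraph

variable {V : Type*} [DecidableEq V]

def endpoints (p : V × V) : Finset V := {p.1, p.2}

def coveredVerts (M : Finset (V × V)) : Finset V := M.biUnion endpoints

lemma mem_coveredVerts {M : Finset (V × V)} {x : V} :
    x ∈ coveredVerts M ↔ ∃ p ∈ M, x ∈ endpoints p :=
  mem_biUnion

lemma endpoints_subset_coveredVerts {M : Finset (V × V)} {p : V × V} (hp : p ∈ M) :
    endpoints p ⊆ coveredVerts M :=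
  subset_biUnion_of_mem _ hp

lemma coveredVerts_mono {M M' : Finset (V × V)} (h : M' ⊆ M) :
    coveredVerts M' ⊆ coveredVerts M :=
  biUnion_subset_biUnion_of_subset_left _ h

lemma coveredVerts_insert (p : V × V) (M : Finset (V × V)) :
    coveredVerts (insert p M) = endpoints p ∪ coveredVerts M :=
  biUnion_insert

structure IsMatchingOn (H : SimpleGraph V) (A : Finset V) (M : Finset (V × V)) : Prop where
  adj : ∀ p ∈ M, H.Adj p.1 p.2
  coveredVerts_subset : coveredVerts M ⊆ A
  pairwiseDisjoint : (M : Set (V × V)).PairwiseDisjoint endpoints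

noncomputable def matchingNum (H : SimpleGraph V) (A : Finset V) : ℕ :=
  sSup {k | ∃ M, H.IsMatchingOn A M ∧ M.card = k}

variable {H : SimpleGraph V} {A B C : Finset V} {M N : Finset (V × V)}

namespace IsMatchingOn

lemma empty (A : Finset V) : H.IsMatchingOn A ∅ :=
  ⟨by simp, by simp [coveredVerts], by simp⟩

lemma of_coveredVerts_subset (h : H.IsMatchingOn A M) (hB : coveredVerts M ⊆ B) :
    H.IsMatchingOn B M :=
  ⟨h.adj, hB, h.pairwiseDisjoint⟩

lemma mono (h : H.IsMatchingOn A M) (hAB : A ⊆ B) : H.IsMatchingOn B M :=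
  h.of_coveredVerts_subset (h.coveredVerts_subset.trans hAB)

lemma subset (h : H.IsMatchingOn A M) (hNM : N ⊆ M) : H.IsMatchingOn A N :=
  ⟨fun p hp => h.adj p (hNM hp), (coveredVerts_mono hNM).trans h.coveredVerts_subset,
    h.pairwiseDisjoint.subset (by simpa using hNM)⟩

lemma eq_of_mem_endpoints (h : H.IsMatchingOn A M) {p q : V × V} (hp : p ∈ M) (hq : q ∈ M)
    {x : V} (hxp : x ∈ endpoints p) (hxq : x ∈ endpoints q) : p = q :=
  h.pairwiseDisjoint.elim_finset hp hq x hxp hxq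

lemma card_endpoints (h : H.IsMatchingOn A M) {p : V × V} (hp : p ∈ M) :
    (endpoints p).card = 2 :=
  card_pair (h.adj p hp).ne

lemma card_coveredVerts (h : H.IsMatchingOn A M) : (coveredVerts M).card = 2 * M.card := by
  rw [coveredVerts, card_biUnion h.pairwiseDisjoint, sum_congr rfl fun p hp => h.card_endpoints hp,
    sum_const, smul_eq_mul, mul_comm]

lemma two_mul_card_le (h : H.IsMatchingOn A M) : 2 * M.card ≤ A.card :=
  h.card_coveredVerts ▸ card_le_card h.coveredVerts_subset

lemma exists_partner (h : H.IsMatchingOn A M) {x : V} (hx : x ∈ coveredVerts M) :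
    ∃ p ∈ M, ∃ y, endpoints p = {x, y} ∧ H.Adj x y := by
  obtain ⟨p, hp, hxp⟩ := mem_coveredVerts.1 hx
  simp only [endpoints, mem_insert, mem_singleton] at hxp
  rcases hxp with rfl | rfl
  · exact ⟨p, hp, p.2, rfl, h.adj p hp⟩
  · exact ⟨p, hp, p.1, pair_comm _ _, (h.adj p hp).symm⟩

lemma coveredVerts_erase (h : H.IsMatchingOn A M) {p : V × V} (hp : p ∈ M) :
    coveredVerts (M.erase p) = coveredVerts M \ endpoints p := by
  ext x
  simp only [mem_coveredVerts, mem_sdiff, mem_erase]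
  constructor
  · rintro ⟨q, ⟨hqp, hq⟩, hxq⟩
    exact ⟨⟨q, hq, hxq⟩, fun hxp => hqp (h.eq_of_mem_endpoints hq hp hxq hxp)⟩
  · rintro ⟨⟨q, hq, hxq⟩, hxp⟩
    exact ⟨q, ⟨by rintro rfl; exact hxp hxq, hq⟩, hxq⟩

lemma erase (h : H.IsMatchingOn A M) {p : V × V} (hp : p ∈ M) :
    H.IsMatchingOn (A \ endpoints p) (M.erase p) :=
  (h.subset (erase_subset p M)).of_coveredVerts_subset
    (h.coveredVerts_erase hp ▸ sdiff_subset_sdiff h.coveredVerts_subset le_rfl)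

lemma insert_of_disjoint (h : H.IsMatchingOn A M) {p : V × V} (hp : H.Adj p.1 p.2)
    (hpA : endpoints p ⊆ A) (hpM : Disjoint (endpoints p) (coveredVerts M)) :
    H.IsMatchingOn A (insert p M) ∧ (insert p M).card = M.card + 1 := by
  have hpM' : p ∉ M := fun hp' =>
    Finset.disjoint_left.1 hpM (by simp [endpoints] : p.1 ∈ endpoints p)
    (endpoints_subset_coveredVerts hp' (by simp [endpoints]))
  refine ⟨⟨?_, ?_, ?_⟩, card_insert_of_notMem hpM'⟩
  · simp only [mem_insert, forall_eq_or_imp]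
    exact ⟨hp, h.adj⟩
  · rw [coveredVerts_insert]
    exact union_subset hpA h.coveredVerts_subset
  · rw [coe_insert]
    exact h.pairwiseDisjoint.insert fun q hq _ =>
      hpM.mono_right (endpoints_subset_coveredVerts hq)

lemma union (hM : H.IsMatchingOn A M) (hN : H.IsMatchingOn B N) (hAB : Disjoint A B) :
    H.IsMatchingOn (A ∪ B) (M ∪ N) ∧ (M ∪ N).card = M.card + N.card := by
  have hd : ∀ p ∈ M, ∀ q ∈ N, Disjoint (endpoints p) (endpoints q) := fun p hp q hq =>
    hAB.mono ((endpoints_subset_coveredVerts hp).trans hM.coveredVerts_subset)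
      ((endpoints_subset_coveredVerts hq).trans hN.coveredVerts_subset)
  refine ⟨⟨?_, ?_, ?_⟩, card_union_of_disjoint ?_⟩
  · intro p hp
    rcases mem_union.1 hp with hp | hp
    exacts [hM.adj p hp, hN.adj p hp]
  · rw [coveredVerts, union_biUnion]
    exact union_subset_union hM.coveredVerts_subset hN.coveredVerts_subset
  · rw [coe_union, Set.pairwiseDisjoint_union]
    refine ⟨hM.pairwiseDisjoint, hN.pairwiseDisjoint, fun p hp q hq _ => hd p hp q hq⟩
  · rw [Finset.disjoint_left]
    intro p hpM hpN
    have := hd p hpM p hpN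
    simp [endpoints] at this

end IsMatchingOn

lemma bddAbove_matchingNum (H : SimpleGraph V) (A : Finset V) :
    BddAbove {k | ∃ M, H.IsMatchingOn A M ∧ M.card = k} :=
  ⟨A.card, by rintro _ ⟨M, hM, rfl⟩; have := hM.two_mul_card_le; omega⟩

lemma IsMatchingOn.card_le_matchingNum (h : H.IsMatchingOn A M) : M.card ≤ H.matchingNum A :=
  le_csSup (bddAbove_matchingNum H A) ⟨M, h, rfl⟩

lemma exists_isMatchingOn_card_eq (H : SimpleGraph V) (A : Finset V) :
    ∃ M, H.IsMatchingOn A M ∧ M.card = H.matchingNum A :=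
  Nat.sSup_mem (s := {k | ∃ M, H.IsMatchingOn A M ∧ M.card = k}) ⟨0, ∅, .empty A, rfl⟩
    (bddAbove_matchingNum H A)

lemma matchingNum_sdiff_add_one_le {x y : V} (hxy : H.Adj x y) (hx : x ∈ A) (hy : y ∈ A) :
    H.matchingNum (A \ {x, y}) + 1 ≤ H.matchingNum A := by
  obtain ⟨M, hM, hMc⟩ := H.exists_isMatchingOn_card_eq (A \ {x, y})
  obtain ⟨hM', hcard⟩ := (hM.mono sdiff_subset).insert_of_disjoint (p := (x, y)) hxy
    (by simp [endpoints, insert_subset_iff, hx, hy])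
    (disjoint_sdiff_self_right.mono_right hM.coveredVerts_subset)
  have := hM'.card_le_matchingNum
  omega

namespace IsMatchingOn

lemma mem_coveredVerts_of_adj (h : H.IsMatchingOn A M) (hmax : M.card = H.matchingNum A)
    {x y : V} (hxy : H.Adj x y) (hx : x ∈ A) (hy : y ∈ A) (hxM : x ∉ coveredVerts M) :
    y ∈ coveredVerts M := by
  by_contra hyM
  obtain ⟨hM', hcard⟩ := h.insert_of_disjoint (p := (x, y)) hxy
    (by simp [endpoints, insert_subset_iff, hx, hy])
    (by simp [endpoints, hxM, hyM])
  have := hM'.card_le_matchingNum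
  omega

lemma matchingNum_sdiff_endpoints (h : H.IsMatchingOn A M) (hmax : M.card = H.matchingNum A)
    {p : V × V} (hp : p ∈ M) : H.matchingNum (A \ endpoints p) + 1 = H.matchingNum A := by
  have hle := (h.erase hp).card_le_matchingNum
  rw [card_erase_of_mem hp] at hle
  have hpA : endpoints p ⊆ A := (endpoints_subset_coveredVerts hp).trans h.coveredVerts_subset
  have : H.matchingNum (A \ endpoints p) + 1 ≤ H.matchingNum A :=
    matchingNum_sdiff_add_one_le (h.adj p hp) (hpA (by simp [endpoints]))
      (hpA (by simp [endpoints]))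
  have := card_pos.2 ⟨p, hp⟩
  omega

end IsMatchingOn

lemma two_mul_matchingNum_le_card (H : SimpleGraph V) (A : Finset V) :
    2 * H.matchingNum A ≤ A.card := by
  obtain ⟨M, hM, hMc⟩ := H.exists_isMatchingOn_card_eq A
  exact hMc ▸ hM.two_mul_card_le

lemma matchingNum_mono (h : A ⊆ B) : H.matchingNum A ≤ H.matchingNum B := by
  obtain ⟨M, hM, hMc⟩ := H.exists_isMatchingOn_card_eq A
  exact hMc ▸ (hM.mono h).card_le_matchingNum

lemma matchingNum_add_matchingNum_le (hAB : Disjoint A B) :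
    H.matchingNum A + H.matchingNum B ≤ H.matchingNum (A ∪ B) := by
  obtain ⟨M, hM, hMc⟩ := H.exists_isMatchingOn_card_eq A
  obtain ⟨N, hN, hNc⟩ := H.exists_isMatchingOn_card_eq B
  obtain ⟨hMN, hcard⟩ := hM.union hN hAB
  have := hMN.card_le_matchingNum
  omega

lemma matchingNum_add_matchingNum_sdiff_le (h : B ⊆ A) :
    H.matchingNum B + H.matchingNum (A \ B) ≤ H.matchingNum A := by
  have := matchingNum_add_matchingNum_le (H := H) (disjoint_sdiff (s := B) (t := A))
  rwa [union_sdiff_of_subset h] at this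

lemma IsMatchingOn.filter_endpoints_subset (h : H.IsMatchingOn A M) (B : Finset V) :
    H.IsMatchingOn B (M.filter (endpoints · ⊆ B)) :=
  (h.subset (filter_subset _ _)).of_coveredVerts_subset
    (biUnion_subset.2 fun _ hp => (mem_filter.1 hp).2)

lemma matchingNum_union_le (hsep : ∀ x ∈ A, ∀ y ∈ B, ¬H.Adj x y) :
    H.matchingNum (A ∪ B) ≤ H.matchingNum A + H.matchingNum B := by
  obtain ⟨M, hM, hMc⟩ := H.exists_isMatchingOn_card_eq (A ∪ B)
  have hsplit : ∀ p ∈ M, endpoints p ⊆ A ∨ endpoints p ⊆ B := by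
    intro p hp
    have hpAB := (endpoints_subset_coveredVerts hp).trans hM.coveredVerts_subset
    simp only [endpoints, insert_subset_iff, singleton_subset_iff, mem_union] at hpAB ⊢
    have hadj := hM.adj p hp
    rcases hpAB with ⟨h1 | h1, h2 | h2⟩
    · exact .inl ⟨h1, h2⟩
    · exact absurd hadj (hsep _ h1 _ h2)
    · exact absurd hadj.symm (hsep _ h2 _ h1)
    · exact .inr ⟨h1, h2⟩
  calc H.matchingNum (A ∪ B) = M.card := hMc.symm
    _ ≤ (M.filter (endpoints · ⊆ A) ∪ M.filter (endpoints · ⊆ B)).card :=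
      card_le_card fun p hp => by simpa [hp] using hsplit p hp
    _ ≤ _ := card_union_le _ _
    _ ≤ H.matchingNum A + H.matchingNum B :=
      add_le_add (hM.filter_endpoints_subset A).card_le_matchingNum
        (hM.filter_endpoints_subset B).card_le_matchingNum

lemma matchingNum_union (hAB : Disjoint A B) (hsep : ∀ x ∈ A, ∀ y ∈ B, ¬H.Adj x y) :
    H.matchingNum (A ∪ B) = H.matchingNum A + H.matchingNum B :=
  (matchingNum_union_le hsep).antisymm (matchingNum_add_matchingNum_le hAB)

lemma matchingNum_insert_le (a : V) (A : Finset V) :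
    H.matchingNum (insert a A) ≤ H.matchingNum A + 1 := by
  obtain ⟨M, hM, hMc⟩ := H.exists_isMatchingOn_card_eq (insert a A)
  by_cases ha : a ∈ coveredVerts M
  · obtain ⟨p, hp, b, hpab, -⟩ := hM.exists_partner ha
    have hsub : insert a A \ endpoints p ⊆ A := by
      rw [hpab, insert_sdiff_of_mem _ (mem_insert_self a _)]
      exact sdiff_subset
    have := ((hM.erase hp).mono hsub).card_le_matchingNum
    rw [card_erase_of_mem hp] at this
    omega
  · have := (hM.of_coveredVerts_subset
      ((subset_insert_iff_of_notMem ha).1 hM.coveredVerts_subset)).card_le_matchingNum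
    omega

lemma matchingNum_insert_of_forall_not_adj {x : V} (hx : ∀ y ∈ A, ¬H.Adj x y) :
    H.matchingNum (insert x A) = H.matchingNum A := by
  refine le_antisymm ?_ (matchingNum_mono (subset_insert x A))
  obtain ⟨M, hM, hMc⟩ := H.exists_isMatchingOn_card_eq (insert x A)
  have hxM : x ∉ coveredVerts M := by
    intro hxM
    obtain ⟨p, hp, y, hpxy, hxy⟩ := hM.exists_partner hxM
    have hy : y ∈ insert x A :=
      hM.coveredVerts_subset (endpoints_subset_coveredVerts hp (by simp [hpxy]))
    exact hx y ((mem_insert.1 hy).resolve_left hxy.ne') hxy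
  exact hMc ▸ (hM.of_coveredVerts_subset
    ((subset_insert_iff_of_notMem hxM).1 hM.coveredVerts_subset)).card_le_matchingNum

/-- Walk along the alternating path `a –M– b –N– c –M– ⋯`, two edges at a time; swapping `M` along
it frees `a` and covers at most the last vertex `z` of the path. -/
theorem IsMatchingOn.exists_swap {a : V} (hM : H.IsMatchingOn A M) (hN : H.IsMatchingOn A N)
    (hMmax : M.card = H.matchingNum A) (hNmax : N.card = H.matchingNum A)
    (haM : a ∈ coveredVerts M) (haN : a ∉ coveredVerts N) :
    ∃ M' z, H.IsMatchingOn A M' ∧ M'.card = H.matchingNum A ∧ a ∉ coveredVerts M' ∧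
      coveredVerts M' ⊆ insert z (coveredVerts M) := by
  induction A using Finset.strongInduction generalizing M N a with
  | H A ih =>
  obtain ⟨p, hp, b, hpab, hab⟩ := hM.exists_partner haM
  have hpA : {a, b} ⊆ A := hpab ▸ (endpoints_subset_coveredVerts hp).trans hM.coveredVerts_subset
  have hbM : b ∈ coveredVerts M := endpoints_subset_coveredVerts hp (by rw [hpab]; simp)
  have hbN : b ∈ coveredVerts N :=
    hN.mem_coveredVerts_of_adj hNmax hab (hpA (by simp)) (hpA (by simp)) haN
  obtain ⟨q, hq, c, hqbc, hbc⟩ := hN.exists_partner hbN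
  have hcN : c ∈ coveredVerts N := endpoints_subset_coveredVerts hq (by simp [hqbc])
  have hca : c ≠ a := by rintro rfl; exact haN hcN
  have hMp := hM.erase hp
  have hMp_cov := hM.coveredVerts_erase hp
  have hνp := hM.matchingNum_sdiff_endpoints hMmax hp
  rw [hpab] at hMp hMp_cov hνp
  have hMp_card : (M.erase p).card + 1 = M.card := card_erase_add_one hp
  obtain ⟨M₀, z, hM₀, hM₀max, hcM₀, hM₀M⟩ : ∃ M₀ z, H.IsMatchingOn (A \ {a, b}) M₀ ∧
      M₀.card = H.matchingNum (A \ {a, b}) ∧ c ∉ coveredVerts M₀ ∧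
      insert c (coveredVerts M₀) ⊆ insert z (coveredVerts M \ {a, b}) := by
    by_cases hcM : c ∈ coveredVerts M
    · have hNq : H.IsMatchingOn (A \ {a, b}) (N.erase q) := by
        refine (hN.subset (erase_subset q N)).of_coveredVerts_subset ?_
        rw [hN.coveredVerts_erase hq, hqbc]
        intro x hx
        simp only [mem_sdiff, mem_insert, mem_singleton, not_or] at hx ⊢
        exact ⟨hN.coveredVerts_subset hx.1, fun hxa => haN (hxa ▸ hx.1), hx.2.1⟩
      have hNq_card : (N.erase q).card + 1 = N.card := card_erase_add_one hq
      have hcMp : c ∈ coveredVerts M \ {a, b} := by simp [hcM, hca, hbc.ne']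
      obtain ⟨M₁, z, hM₁, hM₁max, hcM₁, hM₁M⟩ := ih _ (sdiff_ssubset hpA (by simp)) hMp hNq
        (by omega) (by omega) (hMp_cov ▸ hcMp) (by simp [hN.coveredVerts_erase hq, hqbc])
      exact ⟨M₁, z, hM₁, hM₁max, hcM₁,
        insert_subset (mem_insert_of_mem hcMp) (hMp_cov ▸ hM₁M)⟩
    · exact ⟨M.erase p, c, hMp, by omega, by simp [hMp_cov, hcM],
        insert_subset_insert _ hMp_cov.subset⟩
  have hbM₀ : b ∉ coveredVerts M₀ := fun h => by simpa using hM₀.coveredVerts_subset h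
  have haM₀ : a ∉ coveredVerts M₀ := fun h => by simpa using hM₀.coveredVerts_subset h
  obtain ⟨hM', hM'card⟩ := (hM₀.mono sdiff_subset).insert_of_disjoint (p := (b, c)) hbc
    (by simp [endpoints, insert_subset_iff, hpA (by simp : b ∈ {a, b}),
      hN.coveredVerts_subset hcN])
    (by simp [endpoints, hbM₀, hcM₀])
  refine ⟨_, z, hM', by omega, by simp [coveredVerts_insert, endpoints, hab.ne, hca.symm, haM₀], ?_⟩
  rw [coveredVerts_insert, endpoints, insert_union]
  exact insert_subset (mem_insert_of_mem hbM)
    (hM₀M.trans (insert_subset_insert _ sdiff_subset))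

theorem not_reachable_of_matchingNum_erase_eq
    (hA : ∀ a ∈ A, H.matchingNum (A.erase a) = H.matchingNum A)
    (hM : H.IsMatchingOn A M) (hMmax : M.card = H.matchingNum A) {u v : (A : Set V)}
    (huv : u ≠ v) (hu : ↑u ∉ coveredVerts M) (hv : ↑v ∉ coveredVerts M) :
    ¬(H.induce A).Reachable u v := by
  rintro ⟨walk⟩
  induction walk generalizing M with
  | nil => exact huv rfl
  | @cons u w v hadj walk ih =>
    rw [induce_adj] at hadj
    have hwM := hM.mem_coveredVerts_of_adj hMmax hadj u.2 w.2 hu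
    obtain ⟨N, hN, hNmax⟩ := H.exists_isMatchingOn_card_eq (A.erase w)
    have hwN : ↑w ∉ coveredVerts N := fun h => by simpa using hN.coveredVerts_subset h
    obtain ⟨M', z, hM', hM'max, hwM', hM'M⟩ := hM.exists_swap (hN.mono (erase_subset _ _)) hMmax
      (hNmax.trans (hA w w.2)) hwM hwN
    by_cases hz : ↑u = z
    · refine ih hM' hM'max (by rintro rfl; exact hv hwM) hwM' fun hvM' => ?_
      rcases mem_insert.1 (hM'M hvM') with hvz | hvM
      · exact huv (Subtype.ext (hz.trans hvz.symm))
      · exact hv hvM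
    · refine hwM' (hM'.mem_coveredVerts_of_adj hM'max hadj u.2 w.2 fun huM' => ?_)
      rcases mem_insert.1 (hM'M huM') with huz | huM
      exacts [hz huz, hu huM]

theorem exists_separation_of_matchingNum_erase_eq
    (hA : ∀ a ∈ A, H.matchingNum (A.erase a) = H.matchingNum A)
    (hcard : 2 * H.matchingNum A + 2 ≤ A.card) :
    ∃ B ⊆ A, B.Nonempty ∧ (A \ B).Nonempty ∧ ∀ x ∈ B, ∀ y ∈ A \ B, ¬H.Adj x y := by
  classical
  obtain ⟨M, hM, hMmax⟩ := H.exists_isMatchingOn_card_eq A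
  have hmissed : 1 < (A \ coveredVerts M).card := by
    rw [card_sdiff_of_subset hM.coveredVerts_subset, hM.card_coveredVerts]
    omega
  obtain ⟨u, hu, v, hv, huv⟩ := one_lt_card.1 hmissed
  rw [mem_sdiff] at hu hv
  have hnr := not_reachable_of_matchingNum_erase_eq hA hM hMmax (u := ⟨u, hu.1⟩) (v := ⟨v, hv.1⟩)
    (by simpa using huv) hu.2 hv.2
  refine ⟨A.filter fun x => ∃ hx : x ∈ A, (H.induce A).Reachable ⟨u, hu.1⟩ ⟨x, hx⟩,
    filter_subset _ _, ⟨u, by simp [hu.1]⟩, ⟨v, by simp [hv.1, hnr]⟩, ?_⟩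
  simp only [mem_filter, mem_sdiff, not_and, not_exists]
  rintro x ⟨-, hx, hux⟩ y ⟨hy, hyu⟩ hxy
  exact hyu hy hy (hux.trans (induce_adj.2 hxy).reachable)

def IsSplittable (H : SimpleGraph V) (A : Finset V) : Prop :=
  ∀ s t, 2 ≤ s → 2 ≤ t → s + t + H.matchingNum A = A.card + 1 →
    ∃ S ⊆ A, H.matchingNum S + s ≤ S.card ∧ H.matchingNum (A \ S) + t ≤ (A \ S).card

lemma exists_subset_matchingNum_add_eq_card {v : ℕ}
    (hv : v + H.matchingNum C ≤ C.card) : ∃ S ⊆ C, H.matchingNum S + v = S.card := by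
  induction C using Finset.induction_on with
  | empty =>
    have := H.two_mul_matchingNum_le_card ∅
    exact ⟨∅, subset_rfl, by simp_all⟩
  | insert a C haC ih =>
    by_cases h : v + H.matchingNum C ≤ C.card
    · obtain ⟨S, hS, hSv⟩ := ih h
      exact ⟨S, hS.trans (subset_insert _ _), hSv⟩
    · have := matchingNum_insert_le (H := H) a C
      have := matchingNum_mono (H := H) (subset_insert a C)
      rw [card_insert_of_notMem haC] at hv
      exact ⟨insert a C, subset_rfl, by rw [card_insert_of_notMem haC]; omega⟩

lemma exists_lossless_split {v w : ℕ} (h : v + w + H.matchingNum C = C.card) :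
    ∃ S ⊆ C, H.matchingNum S + v ≤ S.card ∧ H.matchingNum (C \ S) + w ≤ (C \ S).card := by
  obtain ⟨S, hS, hSv⟩ := exists_subset_matchingNum_add_eq_card (H := H) (C := C) (v := v) (by omega)
  have := matchingNum_add_matchingNum_sdiff_le (H := H) hS
  have := card_sdiff_add_card_eq_card hS
  exact ⟨S, hS, hSv.le, by omega⟩

lemma isSplittable_of_card_eq_two_mul (h : A.card = 2 * H.matchingNum A) : H.IsSplittable A := by
  intro s t hs ht hst
  obtain ⟨S, hS, hScard⟩ := exists_subset_card_eq (s := A) (n := 2 * s - 1) (by omega)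
  have := H.two_mul_matchingNum_le_card S
  have := H.two_mul_matchingNum_le_card (A \ S)
  have := card_sdiff_add_card_eq_card hS
  exact ⟨S, hS, by omega, by omega⟩

lemma isSplittable_of_card_eq_two_mul_add_one [DecidableRel H.Adj]
    (h : A.card = 2 * H.matchingNum A + 1) {x : V}
    (hx : x ∈ A) (hdeg : (A.filter (H.Adj x)).card ≤ H.matchingNum A) : H.IsSplittable A := by
  intro s t hs ht hst
  wlog hle : s ≤ t generalizing s t
  · obtain ⟨S, hS, h1, h2⟩ := this t s ht hs (by omega) (by omega)
    exact ⟨A \ S, sdiff_subset, h2, by rwa [Finset.sdiff_sdiff_eq_self hS]⟩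
  have hnonadj : 2 * s - 3 ≤ ((A.erase x).filter (¬H.Adj x ·)).card := by
    have := card_filter_add_card_filter_not (s := A.erase x) (H.Adj x)
    have := card_le_card (filter_subset_filter (H.Adj x) (erase_subset x A))
    have := card_erase_add_one hx
    omega
  obtain ⟨Y, hY, hYcard⟩ := exists_subset_card_eq hnonadj
  have hxY : x ∉ Y := fun h => by simpa using hY h
  have hYA : insert x Y ⊆ A :=
    insert_subset hx fun y hy => mem_of_mem_erase (mem_filter.1 (hY hy)).1
  have hν : H.matchingNum (insert x Y) = H.matchingNum Y :=
    matchingNum_insert_of_forall_not_adj fun y hy => (mem_filter.1 (hY hy)).2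
  have := H.two_mul_matchingNum_le_card Y
  have := H.two_mul_matchingNum_le_card (A \ insert x Y)
  have := card_sdiff_add_card_eq_card hYA
  have := card_insert_of_notMem hxY
  exact ⟨insert x Y, hYA, by omega, by omega⟩

lemma IsSplittable.of_erase {a : V} (ha : a ∈ A)
    (hν : H.matchingNum (A.erase a) < H.matchingNum A) (h : H.IsSplittable (A.erase a)) :
    H.IsSplittable A := by
  intro s t hs ht hst
  have hcard := card_erase_add_one ha
  have hν' := matchingNum_insert_le (H := H) a (A.erase a)
  rw [insert_erase ha] at hν'
  obtain ⟨S, hS, h1, h2⟩ := h s t hs ht (by omega)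
  have haS : a ∉ S := fun h => by simpa using hS h
  have haT : a ∉ A.erase a \ S := by simp
  have hT : A \ S = insert a (A.erase a \ S) := by
    rw [← insert_sdiff_of_notMem _ haS, insert_erase ha]
  have := matchingNum_insert_le (H := H) a (A.erase a \ S)
  refine ⟨S, hS.trans (erase_subset a A), h1, ?_⟩
  rw [hT, card_insert_of_notMem haT]
  omega

lemma IsSplittable.union (hBC : Disjoint B C) (hsep : ∀ x ∈ B, ∀ y ∈ C, ¬H.Adj x y)
    (hB : H.IsSplittable B) (hB3 : H.matchingNum B + 3 ≤ B.card) : H.IsSplittable (B ∪ C) := by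
  intro s t hs ht hst
  rw [matchingNum_union hBC hsep, card_union_of_disjoint hBC] at hst
  have := H.two_mul_matchingNum_le_card C
  -- `S ∩ B` is asked to carry `p` of the `s`, and `S ∩ C` the remaining `s - p`
  set p := max 2 (s + H.matchingNum C - C.card) with hp
  obtain ⟨S₁, hS₁, h1, h2⟩ := hB p (B.card + 1 - H.matchingNum B - p) (by omega) (by omega)
    (by omega)
  obtain ⟨S₂, hS₂, h3, h4⟩ := exists_lossless_split (H := H) (C := C) (v := s - p)
    (w := C.card - H.matchingNum C - (s - p)) (by omega)
  have hS : Disjoint S₁ S₂ := hBC.mono hS₁ hS₂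
  have hT : Disjoint (B \ S₁) (C \ S₂) := hBC.mono sdiff_subset sdiff_subset
  have hBCS : (B ∪ C) \ (S₁ ∪ S₂) = (B \ S₁) ∪ (C \ S₂) := by
    ext x
    have : x ∈ B → x ∉ C := fun h => Finset.disjoint_left.1 hBC h
    have := @hS₁ x
    have := @hS₂ x
    simp only [mem_union, mem_sdiff]
    tauto
  refine ⟨S₁ ∪ S₂, union_subset_union hS₁ hS₂, ?_, ?_⟩
  · rw [matchingNum_union hS fun x hx y hy => hsep x (hS₁ hx) y (hS₂ hy), card_union_of_disjoint hS]
    omega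
  · rw [hBCS, matchingNum_union hT fun x hx y hy => hsep x (sdiff_subset hx) y (sdiff_subset hy),
      card_union_of_disjoint hT]
    omega

def IndepLtCover (H : SimpleGraph V) (A : Finset V) : Prop :=
  ∀ I ⊆ A, H.IsIndepSet I → I.card + H.matchingNum A < A.card

namespace IndepLtCover

lemma erase (h : H.IndepLtCover A) {a : V} (ha : a ∈ A)
    (hν : H.matchingNum (A.erase a) < H.matchingNum A) : H.IndepLtCover (A.erase a) := by
  intro I hI hind
  have := h I (hI.trans (erase_subset a A)) hind
  have := matchingNum_insert_le (H := H) a (A.erase a)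
  rw [insert_erase ha] at this
  have := card_erase_add_one ha
  omega

lemma or_of_union (hBC : Disjoint B C) (hsep : ∀ x ∈ B, ∀ y ∈ C, ¬H.Adj x y)
    (h : H.IndepLtCover (B ∪ C)) : H.IndepLtCover B ∨ H.IndepLtCover C := by
  by_contra! hBC'
  obtain ⟨hB, hC⟩ := hBC'
  simp only [IndepLtCover, not_forall, not_lt] at hB hC
  obtain ⟨I, hI, hIind, hIcard⟩ := hB
  obtain ⟨J, hJ, hJind, hJcard⟩ := hC
  have hind : H.IsIndepSet ↑(I ∪ J) := by
    rw [coe_union, IsIndepSet, Set.pairwise_union]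
    exact ⟨hIind, hJind, fun x hx y hy _ =>
      ⟨hsep x (hI hx) y (hJ hy), fun hyx => hsep x (hI hx) y (hJ hy) hyx.symm⟩⟩
  have := h _ (union_subset_union hI hJ) hind
  rw [matchingNum_union hBC hsep, card_union_of_disjoint hBC,
    card_union_of_disjoint (hBC.mono hI hJ)] at this
  omega

lemma card_filter_adj_lt [DecidableRel H.Adj] (h : H.IndepLtCover A) (hH : H.CliqueFree 3)
    {x : V} : (A.filter (H.Adj x)).card + H.matchingNum A < A.card :=
  h _ (filter_subset _ _) ((isIndepSet_neighborSet_of_triangleFree H hH x).mono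
    fun y hy => by simpa using (mem_filter.1 hy).2)

lemma matchingNum_add_three_le (h : H.IndepLtCover A) (hH : H.CliqueFree 3) :
    H.matchingNum A + 3 ≤ A.card := by
  by_contra hlt
  have hclique : ∀ x ∈ A, ∀ y ∈ A, x ≠ y → H.Adj x y := by
    intro x hx y hy hxy
    by_contra hnadj
    have := h {x, y} (by simp [insert_subset_iff, hx, hy])
      (by simp [IsIndepSet, Set.pairwise_insert, hnadj, mt H.adj_symm hnadj])
    rw [card_pair hxy] at this
    omega
  obtain ⟨x, hx⟩ : A.Nonempty := by
    by_contra hA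
    simpa [not_nonempty_iff_eq_empty.1 hA] using h ∅ (empty_subset _) (by simp)
  have h1 := h {x} (by simpa using hx) (by simp)
  rw [card_singleton] at h1
  obtain ⟨y, hy, z, hz, hyz⟩ := one_lt_card.1 (by omega : 1 < A.card)
  have := matchingNum_sdiff_add_one_le (hclique y hy z hz hyz) hy hz
  obtain ⟨a, ha, b, hb, c, hc, hab, hac, hbc⟩ := two_lt_card.1 (by omega : 2 < A.card)
  exact hH {a, b, c} (is3Clique_triple_iff.2
    ⟨hclique a ha b hb hab, hclique a ha c hc hac, hclique b hb c hc hbc⟩)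

end IndepLtCover

theorem IndepLtCover.isSplittable (hH : H.CliqueFree 3)
    (hA : H.IndepLtCover A) : H.IsSplittable A := by
  classical
  induction A using Finset.strongInduction with
  | H A ih =>
  have h2ν := H.two_mul_matchingNum_le_card A
  obtain hcard | hcard | hcard : A.card = 2 * H.matchingNum A ∨
      A.card = 2 * H.matchingNum A + 1 ∨ 2 * H.matchingNum A + 2 ≤ A.card := by omega
  · exact isSplittable_of_card_eq_two_mul hcard
  · obtain ⟨x, hx⟩ : A.Nonempty := card_pos.1 (by omega)
    have := hA.card_filter_adj_lt hH (x := x)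
    exact isSplittable_of_card_eq_two_mul_add_one hcard hx (by omega)
  by_cases hess : ∃ a ∈ A, H.matchingNum (A.erase a) < H.matchingNum A
  · obtain ⟨a, ha, hν⟩ := hess
    exact (ih _ (erase_ssubset ha) (hA.erase ha hν)).of_erase ha hν
  push Not at hess
  obtain ⟨B, hBA, ⟨u, hu⟩, ⟨v, hv⟩, hsep⟩ := exists_separation_of_matchingNum_erase_eq
    (fun a ha => (matchingNum_mono (erase_subset a A)).antisymm (hess a ha)) hcard
  have hsep' : ∀ y ∈ A \ B, ∀ x ∈ B, ¬H.Adj y x := fun y hy x hx hyx => hsep x hx y hy hyx.symm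
  have hB : B ⊂ A := (ssubset_iff_of_subset hBA).2 ⟨v, sdiff_subset hv, (mem_sdiff.1 hv).2⟩
  have hC : A \ B ⊂ A := sdiff_ssubset hBA ⟨u, hu⟩
  rw [← union_sdiff_of_subset hBA] at hA ⊢
  rcases hA.or_of_union disjoint_sdiff hsep with hBdef | hCdef
  · exact (ih B hB hBdef).union disjoint_sdiff hsep (hBdef.matchingNum_add_three_le hH)
  · rw [union_comm]
    exact (ih _ hC hCdef).union disjoint_sdiff.symm hsep' (hCdef.matchingNum_add_three_le hH)

lemma card_le_card_image_add_matchingNum (hH : H.CliqueFree 3) {κ : Type*} [DecidableEq κ]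
    (c : V → κ) (S : Finset V) (hc : ∀ x ∈ S, ∀ y ∈ S, x ≠ y → c x = c y → H.Adj x y) :
    S.card ≤ (S.image c).card + H.matchingNum S := by
  induction S using Finset.strongInduction with
  | H S ih =>
  rcases S.eq_empty_or_nonempty with rfl | ⟨x, hx⟩
  · simp
  have hcx := card_erase_add_one (mem_image_of_mem c hx)
  by_cases hpartner : ∃ y ∈ S, y ≠ x ∧ c y = c x
  · obtain ⟨y, hy, hyx, hcy⟩ := hpartner
    have hxyS : {x, y} ⊆ S := by simp [insert_subset_iff, hx, hy]
    have himage : (S \ {x, y}).image c ⊆ (S.image c).erase (c x) := by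
      simp only [subset_iff, mem_image, mem_sdiff, mem_insert, mem_singleton, not_or, mem_erase]
      rintro _ ⟨z, ⟨hz, hzx, hzy⟩, rfl⟩
      refine ⟨fun hczx => hH {x, y, z} (is3Clique_triple_iff.2 ⟨?_, ?_, ?_⟩), z, hz, rfl⟩
      · exact hc x hx y hy hyx.symm hcy.symm
      · exact hc x hx z hz (Ne.symm hzx) hczx.symm
      · exact hc y hy z hz (Ne.symm hzy) (hcy.trans hczx.symm)
    have := matchingNum_sdiff_add_one_le (hc x hx y hy hyx.symm hcy.symm) hx hy
    have := ih _ (sdiff_ssubset hxyS (by simp))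
      fun a ha b hb => hc a (sdiff_subset ha) b (sdiff_subset hb)
    have := card_le_card himage
    have := card_sdiff_add_card_eq_card hxyS
    rw [card_pair hyx.symm] at this
    omega
  · push Not at hpartner
    have himage : (S.erase x).image c ⊆ (S.image c).erase (c x) := by
      simp only [subset_iff, mem_image, mem_erase]
      rintro _ ⟨z, ⟨hzx, hz⟩, rfl⟩
      exact ⟨hpartner z hz hzx, z, hz, rfl⟩
    have := ih _ (erase_ssubset hx)
      fun a ha b hb => hc a (mem_of_mem_erase ha) b (mem_of_mem_erase hb)
    have := card_le_card himage
    have := card_erase_add_one hx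
    have := matchingNum_mono (H := H) (erase_subset x S)
    omega

theorem card_sub_matchingNum_compl_le_chromaticNumber {G : SimpleGraph V}
    (hG : Gᶜ.CliqueFree 3) (S : Finset V) :
    ((S.card - Gᶜ.matchingNum S : ℕ) : ℕ∞) ≤ (G.induce (S : Set V)).chromaticNumber := by
  rw [le_chromaticNumber_iff_coloring]
  intro k C
  let c : V → Option (Fin k) := fun x => if hx : x ∈ S then some (C ⟨x, hx⟩) else none
  have hc : ∀ x ∈ S, ∀ y ∈ S, x ≠ y → c x = c y → Gᶜ.Adj x y := by
    intro x hx y hy hxy hcxy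
    simp only [c, dif_pos hx, dif_pos hy, Option.some.injEq] at hcxy
    exact (compl_adj G x y).2 ⟨hxy, fun hadj => C.valid (induce_adj.2 hadj) hcxy⟩
  have himage : S.image c ⊆ univ.map ⟨some, Option.some_injective _⟩ := by
    intro k hk
    obtain ⟨x, hx, rfl⟩ := mem_image.1 hk
    simp [c, hx]
  have hk := card_le_card himage
  have := card_le_card_image_add_matchingNum hG c S hc
  simp only [card_map, card_univ, Fintype.card_fin] at hk
  omega

theorem chromaticNumber_le_card_sub_matchingNum_compl [Fintype V] (G : SimpleGraph V) :
    G.chromaticNumber ≤ (Fintype.card V - Gᶜ.matchingNum univ : ℕ) := by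
  obtain ⟨M, hM, hMc⟩ := Gᶜ.exists_isMatchingOn_card_eq univ
  have hfst : ∀ p ∈ M, ∀ q ∈ M, p.1 = q.1 → p = q := fun p hp q hq h =>
    hM.eq_of_mem_endpoints hp hq (x := p.1) (by simp [endpoints]) (by simp [endpoints, h])
  have hsnd : ∀ p ∈ M, ∀ q ∈ M, p.2 = q.2 → p = q := fun p hp q hq h =>
    hM.eq_of_mem_endpoints hp hq (x := p.2) (by simp [endpoints]) (by simp [endpoints, h])
  have hfst_snd : ∀ p ∈ M, ∀ q ∈ M, p.1 ≠ q.2 := fun p hp q hq h => by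
    obtain rfl := hM.eq_of_mem_endpoints hp hq (x := p.1) (by simp [endpoints])
      (by simp [endpoints, h])
    exact (hM.adj p hp).ne h
  -- the colour classes are the edges of `M` and the vertices it misses
  let c : V → V := fun x => if h : ∃ p ∈ M, p.2 = x then h.choose.1 else x
  have hc : ∀ x, c x ∉ M.image Prod.snd := by
    intro x
    simp only [c, mem_image, not_exists, not_and]
    split_ifs with h
    · exact fun q hq hq2 => hfst_snd _ h.choose_spec.1 q hq hq2.symm
    · exact fun q hq hq2 => h ⟨q, hq, hq2⟩
  have hvalid : ∀ {x y}, G.Adj x y → c x ≠ c y := by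
    intro x y hxy hcxy
    simp only [c] at hcxy
    split_ifs at hcxy with hx hy hy
    · exact hxy.ne (hx.choose_spec.2.symm.trans
        (hfst _ hx.choose_spec.1 _ hy.choose_spec.1 hcxy ▸ hy.choose_spec.2))
    · have h := hM.adj _ hx.choose_spec.1
      rw [hcxy, hx.choose_spec.2, compl_adj] at h
      exact h.2 hxy.symm
    · have h := hM.adj _ hy.choose_spec.1
      rw [← hcxy, hy.choose_spec.2, compl_adj] at h
      exact h.2 hxy
    · exact hxy.ne hcxy
  let C : G.Coloring (univ \ M.image Prod.snd : Finset V) :=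
    Coloring.mk (fun x => ⟨c x, by simp [hc x]⟩) fun hxy h => hvalid hxy (congrArg Subtype.val h)
  have := C.colorable.chromaticNumber_le
  rwa [Fintype.card_coe, card_sdiff_of_subset (subset_univ _), card_univ,
    card_image_of_injOn fun p hp q hq => hsnd p hp q hq, hMc] at this

end SimpleGraph

/-- The Erdős–Lovász Tihany conjecture for graphs with stability number 2 (Balogh et al.):
if `χ(G) > ω(G)`, `α(G) = 2`, and `s, t ≥ 2` with `s + t = χ(G) + 1`, then `V(G)` partitions
into `S, T` with `χ(G|S) ≥ s` and `χ(G|T) ≥ t`. -/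
theorem stmt13 {V : Type*} [Fintype V] (G : SimpleGraph V)
    (hχω : (G.cliqueNum : ℕ∞) < G.chromaticNumber)
    (hα : Gᶜ.cliqueNum = 2)
    (s t : ℕ) (hs : 2 ≤ s) (ht : 2 ≤ t)
    (hst : ((s + t : ℕ) : ℕ∞) = G.chromaticNumber + 1) :
    ∃ S T : Set V, S ∪ T = Set.univ ∧ Disjoint S T ∧
      (s : ℕ∞) ≤ (G.induce S).chromaticNumber ∧
      (t : ℕ∞) ≤ (G.induce T).chromaticNumber := by
  classical
  have hG : Gᶜ.CliqueFree 3 := fun u hu => by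
    have := IsClique.card_le_cliqueNum (tc := hu.isClique)
    rw [hu.card_eq, hα] at this
    omega
  have hχ : G.chromaticNumber = (Fintype.card V - Gᶜ.matchingNum univ : ℕ) :=
    (chromaticNumber_le_card_sub_matchingNum_compl G).antisymm <| by
      simpa using (card_sub_matchingNum_compl_le_chromaticNumber hG univ).trans
        (chromaticNumber_mono_of_hom (Embedding.induce _).toHom)
  rw [hχ] at hχω hst
  norm_cast at hχω hst
  have h2ν := Gᶜ.two_mul_matchingNum_le_card univ
  rw [card_univ] at h2ν
  have hcover : Gᶜ.IndepLtCover univ := fun I _ hI => by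
    have := IsClique.card_le_cliqueNum (tc := (isIndepSet_compl G).1 hI)
    rw [card_univ]
    omega
  obtain ⟨S, -, hS, hT⟩ := hcover.isSplittable hG s t hs ht (by rw [card_univ]; omega)
  refine ⟨S, ↑(univ \ S), by simp, disjoint_coe.2 disjoint_sdiff, ?_, ?_⟩
  · exact (Nat.cast_le.2 (by omega)).trans (card_sub_matchingNum_compl_le_chromaticNumber hG S)
  · exact (Nat.cast_le.2 (by omega)).trans
      (card_sub_matchingNum_compl_le_chromaticNumber hG (univ \ S))
end

section
/- Let (G, A, B, C) be a three-cliqued graph and K a dense clique of G that is tri-cliqued (K meets all three of A, B, C and every vertex of K lies in a triad of G). Then for any worn hex-join H of (G,A,B,C) with another three-cliqued claw-free graph (G',A',B',C'), the set of common neighbors of K in H lies entirely within V(G), hence is a clique in H; consequently, if χ(H) > ω(H), then K is Tihany in H. -/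
open SimpleGraph

/-- `v` lies in a triad (stable set of size 3) of `G`. -/
def InTriad {V : Type*} (G : SimpleGraph V) (v : V) : Prop :=
  ∃ x y, v ≠ x ∧ v ≠ y ∧ x ≠ y ∧ ¬ G.Adj v x ∧ ¬ G.Adj v y ∧ ¬ G.Adj x y

/-- Extend a coloring of `H - K` by `|K|` fresh colors. -/
lemma extend_coloring {W : Type*} (H : SimpleGraph W) (K : Finset W) {n : ℕ}
    (hc : (H.induce ((↑K : Set W)ᶜ)).Colorable n) : H.Colorable (n + K.card) := by
  classical
  obtain ⟨φ⟩ := hc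
  let f : W → Fin n ⊕ {x // x ∈ K} := fun w =>
    if hw : w ∈ K then Sum.inr ⟨w, hw⟩
    else Sum.inl (φ ⟨w, by simp [hw]⟩)
  have valid : ∀ {v w : W}, H.Adj v w → f v ≠ f w := by
    intro v w hvw
    by_cases hv : v ∈ K <;> by_cases hw : w ∈ K <;>
      simp only [f, dif_pos, dif_neg, hv, hw, not_false_iff]
    · simp only [ne_eq, Sum.inr.injEq, Subtype.mk.injEq]
      exact hvw.ne
    · simp
    · simp
    · simp only [ne_eq, Sum.inl.injEq]
      exact φ.valid (by simpa [SimpleGraph.comap_adj] using hvw)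
  have := (SimpleGraph.Coloring.mk f valid).colorable
  simpa [Fintype.card_sum, Fintype.card_coe] using this

/-- Key lemma: if the common neighborhood of the clique `K` is a clique avoiding
more than its size in colors, extend a coloring of `H - K` by only `|K| - 1` new colors. -/
lemma key_coloring {W : Type*} [Fintype W] (H : SimpleGraph W) (K : Finset W)
    (u1 : W) (hu1 : u1 ∈ K) {n : ℕ}
    (hCN : H.IsClique (commonNbrs H (↑K : Set W)))
    (hcard : (commonNbrs H (↑K : Set W)).ncard < n)
    (hc : (H.induce ((↑K : Set W)ᶜ)).Colorable n) : H.Colorable (n + (K.card - 1)) := by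
  classical
  obtain ⟨φ⟩ := hc
  set CN := commonNbrs H (↑K : Set W) with hCNdef
  have hsub : ∀ x ∈ CN, x ∈ ((↑K : Set W)ᶜ) := fun x hx => by
    simpa using hx.1
  -- find a color α not used on CN
  haveI : Fintype CN := Fintype.ofFinite _
  let e : CN → Fin n := fun x => φ ⟨x.1, hsub x.1 x.2⟩
  have he : Function.Injective e := by
    rintro ⟨x, hx⟩ ⟨y, hy⟩ hxy
    by_contra hne
    have hne' : x ≠ y := fun h => hne (by simpa using h)
    have hadj : H.Adj x y := hCN hx hy hne'
    exact φ.valid (by simpa [SimpleGraph.comap_adj] using hadj) hxy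
  have hcardCN : (Finset.univ.image e).card < n := by
    rw [Finset.card_image_of_injective _ he, Finset.card_univ]
    rwa [← Nat.card_coe_set_eq, Nat.card_eq_fintype_card] at hcard
  have hαex : ∃ α : Fin n, α ∉ Finset.univ.image e := by
    have : ((Finset.univ.image e)ᶜ : Finset (Fin n)).Nonempty := by
      rw [← Finset.card_pos, Finset.card_compl, Fintype.card_fin]
      omega
    obtain ⟨α, hα⟩ := this
    exact ⟨α, Finset.mem_compl.mp hα⟩
  obtain ⟨α, hα⟩ := hαex
  have hαCN : ∀ x (hx : x ∈ ((↑K : Set W)ᶜ)), x ∈ CN → φ ⟨x, hx⟩ ≠ α := by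
    intro x hx hxCN h
    exact hα (Finset.mem_image.mpr ⟨⟨x, hxCN⟩, Finset.mem_univ _, h⟩)
  -- every recolor-candidate has a non-neighbor in K.erase u1
  have hex : ∀ w (hw : w ∉ K), H.Adj w u1 →
      φ ⟨w, by simp [hw]⟩ = α → ∃ u, u ∈ K.erase u1 ∧ ¬ H.Adj w u := by
    intro w hw hadj hcol
    have hwCN : w ∉ CN := fun hwCN => hαCN w (by simp [hw]) hwCN hcol
    rw [hCNdef] at hwCN
    simp only [commonNbrs, Set.mem_setOf_eq, not_and, not_forall] at hwCN
    have hw' : w ∉ (↑K : Set W) := by simpa using hw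
    obtain ⟨u, hu, hnadj⟩ := hwCN hw'
    refine ⟨u, Finset.mem_erase.mpr ⟨?_, by simpa using hu⟩, hnadj⟩
    intro h; exact hnadj (h ▸ hadj)
  -- the new coloring
  let f : W → Fin n ⊕ {x // x ∈ K.erase u1} := fun w =>
    if hw : w ∈ K then
      if hwu : w = u1 then Sum.inl α
      else Sum.inr ⟨w, Finset.mem_erase.mpr ⟨hwu, hw⟩⟩
    else
      if hre : H.Adj w u1 ∧ φ ⟨w, by simp [hw]⟩ = α then
        Sum.inr ⟨(hex w hw hre.1 hre.2).choose, (hex w hw hre.1 hre.2).choose_spec.1⟩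
      else Sum.inl (φ ⟨w, by simp [hw]⟩)
  have hmix : ∀ v w, H.Adj v w → v ∈ K → w ∉ K → f v ≠ f w := by
    intro v w hvw hv hw
    by_cases hvu : v = u1
    · have h1 : f v = Sum.inl α := by rw [hvu]; simp [f, hu1]
      by_cases hre : H.Adj w u1 ∧ φ ⟨w, by simp [hw]⟩ = α
      · rw [h1]; simp [f, hw, hre]
      · have h2 : f w = Sum.inl (φ ⟨w, by simp [hw]⟩) := by simp [f, hw, hre]
        rw [h1, h2]
        simp only [ne_eq, Sum.inl.injEq]
        intro h
        exact hre ⟨(hvu ▸ hvw : H.Adj u1 w).symm, h.symm⟩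
    · by_cases hre : H.Adj w u1 ∧ φ ⟨w, by simp [hw]⟩ = α
      · simp only [f, dif_pos hv, dif_neg hvu, dif_neg hw, dif_pos hre]
        simp only [ne_eq, Sum.inr.injEq, Subtype.mk.injEq]
        intro h
        exact (hex w hw hre.1 hre.2).choose_spec.2 (h ▸ hvw.symm)
      · simp only [f, dif_pos hv, dif_neg hvu, dif_neg hw, dif_neg hre]
        simp
  have valid : ∀ {v w : W}, H.Adj v w → f v ≠ f w := by
    intro v w hvw
    by_cases hv : v ∈ K <;> by_cases hw : w ∈ K
    · by_cases hvu : v = u1 <;> by_cases hwu : w = u1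
      · exact absurd (hvu.trans hwu.symm) hvw.ne
      · simp only [f, dif_pos hv, dif_pos hw, dif_pos hvu, dif_neg hwu]; simp
      · simp only [f, dif_pos hv, dif_pos hw, dif_neg hvu, dif_pos hwu]; simp
      · simp only [f, dif_pos hv, dif_pos hw, dif_neg hvu, dif_neg hwu]
        simp only [ne_eq, Sum.inr.injEq, Subtype.mk.injEq]
        exact hvw.ne
    · exact hmix v w hvw hv hw
    · exact (hmix w v hvw.symm hw hv).symm
    · by_cases hre1 : H.Adj v u1 ∧ φ ⟨v, by simp [hv]⟩ = α <;>
        by_cases hre2 : H.Adj w u1 ∧ φ ⟨w, by simp [hw]⟩ = α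
      · exfalso
        have : φ ⟨v, by simp [hv]⟩ ≠ φ ⟨w, by simp [hw]⟩ :=
          φ.valid (by simpa [SimpleGraph.comap_adj] using hvw)
        rw [hre1.2, hre2.2] at this
        exact this rfl
      · simp only [f, dif_neg hv, dif_neg hw, dif_pos hre1, dif_neg hre2]; simp
      · simp only [f, dif_neg hv, dif_neg hw, dif_neg hre1, dif_pos hre2]; simp
      · simp only [f, dif_neg hv, dif_neg hw, dif_neg hre1, dif_neg hre2]
        simp only [ne_eq, Sum.inl.injEq]
        exact φ.valid (by simpa [SimpleGraph.comap_adj] using hvw)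
  have hc2 := (SimpleGraph.Coloring.mk f valid).colorable
  rwa [Fintype.card_sum, Fintype.card_fin, Fintype.card_coe,
    Finset.card_erase_of_mem hu1] at hc2

/-- `K ∪ C(K)` is a clique, so `|K| + |C(K)| ≤ ω`. -/
lemma clique_union_bound {W : Type*} [Fintype W] (H : SimpleGraph W) (K : Finset W)
    (hK : H.IsClique (↑K : Set W)) (hCN : H.IsClique (commonNbrs H (↑K : Set W))) :
    K.card + (commonNbrs H (↑K : Set W)).ncard ≤ H.cliqueNum := by
  classical
  set CN := commonNbrs H (↑K : Set W) with hCNdef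
  have hfin : CN.Finite := Set.toFinite _
  set T : Finset W := K ∪ hfin.toFinset with hT
  have hdisj : Disjoint K hfin.toFinset := by
    rw [Finset.disjoint_left]
    intro x hx hx'
    have : x ∈ CN := hfin.mem_toFinset.mp hx'
    exact this.1 (by simpa using hx)
  have hclique : H.IsClique (↑T : Set W) := by
    intro x hx y hy hne
    rw [hT] at hx hy
    simp only [Finset.coe_union, Set.mem_union, Finset.mem_coe,
      Set.Finite.mem_toFinset] at hx hy
    rcases hx with hx | hx <;> rcases hy with hy | hy
    · exact hK (by simpa using hx) (by simpa using hy) hne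
    · exact (hy.2 x (by simpa using hx)).symm
    · exact hx.2 y (by simpa using hy)
    · exact hCN hx hy hne
  have hcard : T.card = K.card + CN.ncard := by
    rw [hT, Finset.card_union_of_disjoint hdisj, Set.ncard_eq_toFinset_card CN hfin]
  calc K.card + CN.ncard = T.card := hcard.symm
    _ ≤ H.cliqueNum := hclique.card_le_cliqueNum

/-- If `K` is a dense, tri-cliqued clique of the three-cliqued graph `(G, A, B, C)` and `H`
is a worn hex-join of `(G, A, B, C)` with a three-cliqued claw-free graph `(G', A', B', C')`,
then the common neighborhood of `K` in `H` lies inside `V(G)` and is a clique of `H`;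
consequently if `χ(H) > ω(H)` then `K` is Tihany in `H`. -/
theorem stmt15 {V V' : Type*} [Fintype V] [Fintype V']
    (G : SimpleGraph V) (A B C : Set V)
    (hcover : A ∪ B ∪ C = Set.univ)
    (hdAB : Disjoint A B) (hdAC : Disjoint A C) (hdBC : Disjoint B C)
    (hA : G.IsClique A) (hB : G.IsClique B) (hC : G.IsClique C)
    (G' : SimpleGraph V') (A' B' C' : Set V')
    (hcover' : A' ∪ B' ∪ C' = Set.univ)
    (hdAB' : Disjoint A' B') (hdAC' : Disjoint A' C') (hdBC' : Disjoint B' C')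
    (hA' : G'.IsClique A') (hB' : G'.IsClique B') (hC' : G'.IsClique C')
    (hcf' : ClawFree G')
    (H : SimpleGraph (V ⊕ V'))
    (hHl : ∀ u v : V, H.Adj (Sum.inl u) (Sum.inl v) ↔ G.Adj u v)
    (hHr : ∀ u v : V', H.Adj (Sum.inr u) (Sum.inr v) ↔ G'.Adj u v)
    -- hex-join: A is complete to V' \ B', B to V' \ C', C to V' \ A'
    (hjA : ∀ u ∈ A, ∀ v ∈ B'ᶜ, H.Adj (Sum.inl u) (Sum.inr v))
    (hjB : ∀ u ∈ B, ∀ v ∈ C'ᶜ, H.Adj (Sum.inl u) (Sum.inr v))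
    (hjC : ∀ u ∈ C, ∀ v ∈ A'ᶜ, H.Adj (Sum.inl u) (Sum.inr v))
    -- worn condition: extra cross edges only between vertices lying in no triads
    (hwA : ∀ u ∈ A, ∀ v ∈ B', H.Adj (Sum.inl u) (Sum.inr v) →
      ¬ InTriad G u ∧ ¬ InTriad G' v)
    (hwB : ∀ u ∈ B, ∀ v ∈ C', H.Adj (Sum.inl u) (Sum.inr v) →
      ¬ InTriad G u ∧ ¬ InTriad G' v)
    (hwC : ∀ u ∈ C, ∀ v ∈ A', H.Adj (Sum.inl u) (Sum.inr v) →
      ¬ InTriad G u ∧ ¬ InTriad G' v)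
    (K : Finset V) (hK : G.IsClique (↑K : Set V))
    (hdense : G.IsClique (commonNbrs G (↑K : Set V)))
    (htriA : ((↑K : Set V) ∩ A).Nonempty) (htriB : ((↑K : Set V) ∩ B).Nonempty)
    (htriC : ((↑K : Set V) ∩ C).Nonempty)
    (htriad : ∀ v ∈ K, InTriad G v) :
    (∀ w ∈ commonNbrs H (Sum.inl '' (↑K : Set V)), ∃ u : V, w = Sum.inl u) ∧
    H.IsClique (commonNbrs H (Sum.inl '' (↑K : Set V))) ∧
    ((H.cliqueNum : ℕ∞) < H.chromaticNumber →
      H.chromaticNumber - (K.card : ℕ∞) + 1 ≤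
        (H.induce ((Sum.inl '' (↑K : Set V))ᶜ)).chromaticNumber) := by
  classical
  obtain ⟨a, haK, haA⟩ := htriA
  obtain ⟨b, hbK, hbB⟩ := htriB
  obtain ⟨c, hcK, hcC⟩ := htriC
  have haK' : a ∈ K := Finset.mem_coe.mp haK
  have hbK' : b ∈ K := Finset.mem_coe.mp hbK
  have hcK' : c ∈ K := Finset.mem_coe.mp hcK
  have part1 : ∀ w ∈ commonNbrs H (Sum.inl '' (↑K : Set V)), ∃ u : V, w = Sum.inl u := by
    rintro (u | v) hw
    · exact ⟨u, rfl⟩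
    · exfalso
      have hadj : ∀ x ∈ K, H.Adj (Sum.inl x) (Sum.inr v) := fun x hx =>
        (hw.2 (Sum.inl x) ⟨x, hx, rfl⟩).symm
      have hv : v ∈ A' ∪ B' ∪ C' := by rw [hcover']; trivial
      rcases hv with (hv | hv) | hv
      · exact (hwC c hcC v hv (hadj c hcK')).1 (htriad c hcK')
      · exact (hwA a haA v hv (hadj a haK')).1 (htriad a haK')
      · exact (hwB b hbB v hv (hadj b hbK')).1 (htriad b hbK')
  have part2 : H.IsClique (commonNbrs H (Sum.inl '' (↑K : Set V))) := by
    intro x hx y hy hne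
    obtain ⟨p, rfl⟩ := part1 x hx
    obtain ⟨q, rfl⟩ := part1 y hy
    have hp : p ∈ commonNbrs G (↑K : Set V) := by
      refine ⟨fun hmem => hx.1 ⟨p, hmem, rfl⟩, fun u hu => ?_⟩
      exact (hHl p u).mp (hx.2 (Sum.inl u) ⟨u, hu, rfl⟩)
    have hq : q ∈ commonNbrs G (↑K : Set V) := by
      refine ⟨fun hmem => hy.1 ⟨q, hmem, rfl⟩, fun u hu => ?_⟩
      exact (hHl q u).mp (hy.2 (Sum.inl u) ⟨u, hu, rfl⟩)
    have hpq : p ≠ q := fun h => hne (by rw [h])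
    exact (hHl p q).mpr (hdense hp hq hpq)
  refine ⟨part1, part2, ?_⟩
  intro hlt
  set KH : Finset (V ⊕ V') := K.image Sum.inl with hKH
  have hKHcoe : (↑KH : Set (V ⊕ V')) = Sum.inl '' (↑K : Set V) := by
    rw [hKH, Finset.coe_image]
  have hKHcard : KH.card = K.card := Finset.card_image_of_injective _ Sum.inl_injective
  have hKHclique : H.IsClique (↑KH : Set (V ⊕ V')) := by
    rw [hKHcoe]
    rintro x ⟨p, hp, rfl⟩ y ⟨q, hq, rfl⟩ hne
    exact (hHl p q).mpr (hK hp hq (fun h => hne (by rw [h])))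
  have hu1 : Sum.inl a ∈ KH := Finset.mem_image_of_mem _ haK'
  haveI : Fintype ↥(((Sum.inl '' (↑K : Set V) : Set (V ⊕ V')))ᶜ) := (Set.toFinite _).fintype
  have hχHne : H.chromaticNumber ≠ ⊤ := by
    rw [chromaticNumber_ne_top_iff_exists]
    exact ⟨_, H.colorable_of_fintype⟩
  have hχIne : (H.induce ((Sum.inl '' (↑K : Set V))ᶜ)).chromaticNumber ≠ ⊤ := by
    rw [chromaticNumber_ne_top_iff_exists]
    exact ⟨_, colorable_of_fintype _⟩
  set nI := (H.induce ((Sum.inl '' (↑K : Set V))ᶜ)).chromaticNumber.toNat with hnIdef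
  have hχIeq : (nI : ℕ∞) = (H.induce ((Sum.inl '' (↑K : Set V))ᶜ)).chromaticNumber :=
    ENat.coe_toNat hχIne
  set m := H.chromaticNumber.toNat with hmdef
  have hχHeq : (m : ℕ∞) = H.chromaticNumber := ENat.coe_toNat hχHne
  have hcolI : (H.induce ((↑KH : Set (V ⊕ V'))ᶜ)).Colorable nI := by
    rw [hKHcoe]
    exact colorable_chromaticNumber_of_fintype _
  have hCNclique : H.IsClique (commonNbrs H (↑KH : Set (V ⊕ V'))) := by
    rw [hKHcoe]; exact part2
  set cCN := (commonNbrs H (↑KH : Set (V ⊕ V'))).ncard with hcCN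
  have hk1 : 1 ≤ K.card := Finset.card_pos.mpr ⟨a, haK'⟩
  by_cases hcase : cCN < nI
  · have hcol := key_coloring H KH (Sum.inl a) hu1 hCNclique hcase hcolI
    have hle : H.chromaticNumber ≤ ((nI + (KH.card - 1) : ℕ) : ℕ∞) :=
      hcol.chromaticNumber_le
    rw [← hχHeq] at hle
    have hle' : m ≤ nI + (K.card - 1) := by
      rw [hKHcard] at hle
      exact_mod_cast hle
    have goalnat : m - K.card + 1 ≤ nI := by omega
    rw [← hχHeq, ← hχIeq]
    exact_mod_cast goalnat
  · push_neg at hcase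
    exfalso
    have hcol := extend_coloring H KH hcolI
    have hle : H.chromaticNumber ≤ ((nI + KH.card : ℕ) : ℕ∞) :=
      hcol.chromaticNumber_le
    have hω : KH.card + cCN ≤ H.cliqueNum := clique_union_bound H KH hKHclique hCNclique
    have hle2 : H.chromaticNumber ≤ (H.cliqueNum : ℕ∞) :=
      le_trans hle (by exact_mod_cast (by omega : nI + KH.card ≤ H.cliqueNum))
    exact lt_irrefl _ (hlt.trans_le hle2)
end

section
/- Let G be a claw-free graph admitting a non-reduced W-join. Then there exists a graph H with V(H) = V(G), E(H) ⊊ E(G) in the sense |E(H)| < |E(G)|, such that H is claw-free and χ(H) = χ(G). -/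
open SimpleGraph

/-- `(A, B)` is a homogeneous pair of cliques. -/
def IsHomogeneousPair {V : Type*} (G : SimpleGraph V) (A B : Set V) : Prop :=
  Disjoint A B ∧ G.IsClique A ∧ G.IsClique B ∧
    ∀ v ∉ A ∪ B,
      ((∀ a ∈ A, G.Adj v a) ∨ (∀ a ∈ A, ¬ G.Adj v a)) ∧
      ((∀ b ∈ B, G.Adj v b) ∨ (∀ b ∈ B, ¬ G.Adj v b))

/-- A W-join is a homogeneous pair in which `A` is neither complete nor anticomplete
to `B`. -/
def IsWJoin {V : Type*} (G : SimpleGraph V) (A B : Set V) : Prop :=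
  IsHomogeneousPair G A B ∧
    (∃ a ∈ A, ∃ b ∈ B, G.Adj a b) ∧ (∃ a ∈ A, ∃ b ∈ B, ¬ G.Adj a b)

/-- A W-join `(A, B)` is reduced if `A` and `B` split as `A₁ ∪ A₂`, `B₁ ∪ B₂` with `A₁`
complete to `B₁`, `A₂` anticomplete to `B`, and `B₂` anticomplete to `A`. -/
def IsReducedWJoin {V : Type*} (G : SimpleGraph V) (A B : Set V) : Prop :=
  ∃ A₁ A₂ B₁ B₂ : Set V, A = A₁ ∪ A₂ ∧ Disjoint A₁ A₂ ∧ B = B₁ ∪ B₂ ∧ Disjoint B₁ B₂ ∧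
    (∀ a ∈ A₁, ∀ b ∈ B₁, G.Adj a b) ∧
    (∀ a ∈ A₂, ∀ b ∈ B, ¬ G.Adj a b) ∧
    (∀ a ∈ A, ∀ b ∈ B₂, ¬ G.Adj a b)

/-!
Take a minimum cover `(S, T)`, `S ⊆ A`, `T ⊆ B`, of the non-adjacent pairs between `A` and `B`,
and delete every edge between `A` and `B` that meets `S ∪ T`; non-reducedness says that some edge
goes. By König's argument (Hall's theorem applied to a minimum cover) there are injections
`S → B \ T` and `T → A \ S` along non-edges. So every vertex of `S ∪ T` has a non-neighbour on
the other side, which is what prevents a new claw. In a colouring of the smaller graph, vertices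
`a ∈ A`, `b ∈ B` of the same colour form a pair meeting `S ∪ T`, so the colours shared by `A` and
`B` inject into `S ⊕ T`, which indexes a matching of non-edges of `G`. Permuting the colours inside
`A` and inside `B` moves each shared colour onto such a non-edge, which gives a colouring of `G`.
-/

open SimpleGraph Finset Function Equiv

section RelCover

variable {α β : Type*} (r : α → β → Prop) (X : Finset α) (Y : Finset β)

structure IsRelCover (S : Finset α) (T : Finset β) : Prop where
  subset_left : S ⊆ X
  subset_right : T ⊆ Y
  cover : ∀ x ∈ X, ∀ y ∈ Y, r x y → x ∈ S ∨ y ∈ T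

structure IsMinRelCover (S : Finset α) (T : Finset β) : Prop extends IsRelCover r X Y S T where
  card_le : ∀ S' T', IsRelCover r X Y S' T' → #S + #T ≤ #S' + #T'

variable {r X Y} {S : Finset α} {T : Finset β}

theorem exists_isMinRelCover : ∃ S T, IsMinRelCover r X Y S T := by
  classical
  let covers := (X.powerset ×ˢ Y.powerset).filter fun p => IsRelCover r X Y p.1 p.2
  have hX : (X, ∅) ∈ covers := by
    simp only [covers, mem_filter, mem_product, mem_powerset, Subset.refl, empty_subset, true_and]
    exact ⟨Subset.refl _, empty_subset _, fun x hx _ _ _ => Or.inl hx⟩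
  obtain ⟨⟨S, T⟩, hST, hmin⟩ := covers.exists_min_image (fun p => #p.1 + #p.2) ⟨_, hX⟩
  refine ⟨S, T, (mem_filter.1 hST).2, fun S' T' h' => hmin (S', T') ?_⟩
  simpa [covers, h'] using And.intro h'.subset_left h'.subset_right

theorem IsRelCover.swap (h : IsRelCover r X Y S T) : IsRelCover (flip r) Y X T S :=
  ⟨h.subset_right, h.subset_left, fun y hy x hx hr => (h.cover x hx y hy hr).symm⟩

theorem IsMinRelCover.swap (h : IsMinRelCover r X Y S T) : IsMinRelCover (flip r) Y X T S :=
  ⟨h.toIsRelCover.swap, fun T' S' h' => by have := h.card_le S' T' h'.swap; omega⟩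

theorem IsMinRelCover.exists_injective (h : IsMinRelCover r X Y S T) :
    ∃ f : S → β, Injective f ∧ ∀ s, f s ∈ Y ∧ f s ∉ T ∧ r s (f s) := by
  classical
  suffices hall : ∀ s' : Finset S, #s' ≤ #(s'.biUnion fun s => {y ∈ Y \ T | r s y}) by
    obtain ⟨f, hf, hfr⟩ := (all_card_le_biUnion_card_iff_exists_injective _).1 hall
    exact ⟨f, hf, fun s => by simpa [and_assoc] using mem_filter.1 (hfr s)⟩
  intro s'
  by_contra! hlt
  set U := s'.biUnion fun s => {y ∈ Y \ T | r s y}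
  set s'' := s'.map (Embedding.subtype _)
  -- Trading `s'` for its neighbourhood `U` would give a smaller cover.
  have hcov : IsRelCover r X Y (S \ s'') (T ∪ U) := by
    refine ⟨sdiff_subset.trans h.subset_left, union_subset h.subset_right fun y hy => ?_,
      fun x hx y hy hr => ?_⟩
    · obtain ⟨_, _, hy⟩ := mem_biUnion.1 hy
      exact (mem_sdiff.1 (mem_filter.1 hy).1).1
    rcases h.cover x hx y hy hr with hxS | hyT
    · by_cases hxs : x ∈ s''
      · by_cases hyT : y ∈ T
        · exact Or.inr (mem_union_left _ hyT)
        obtain ⟨s, hs, rfl⟩ := mem_map.1 hxs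
        exact Or.inr (mem_union_right _ (mem_biUnion.2 ⟨s, hs, by simpa [hy, hyT] using hr⟩))
      · exact Or.inl (mem_sdiff.2 ⟨hxS, hxs⟩)
    · exact Or.inr (mem_union_left _ hyT)
  have hs''S : s'' ⊆ S := fun x hx => by
    obtain ⟨s, -, rfl⟩ := mem_map.1 hx
    exact s.2
  have h₁ := h.card_le _ _ hcov
  have h₂ : #(S \ s'') = #S - #s' := by rw [card_sdiff_of_subset hs''S, card_map]
  have h₃ : #s' ≤ #S := by simpa [s''] using card_le_card hs''S
  have h₄ := card_union_le T U
  omega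

theorem IsMinRelCover.exists_matching (h : IsMinRelCover r X Y S T) :
    ∃ (x : S ⊕ T → α) (y : S ⊕ T → β), Injective x ∧ Injective y ∧
      ∀ i, x i ∈ X ∧ y i ∈ Y ∧ r (x i) (y i) := by
  obtain ⟨f, hf, hfY⟩ := h.exists_injective
  obtain ⟨g, hg, hgX⟩ := h.swap.exists_injective
  refine ⟨Sum.elim Subtype.val g, Sum.elim f Subtype.val,
    Subtype.val_injective.sumElim hg fun s t hst => (hgX t).2.1 (hst ▸ s.2),
    hf.sumElim Subtype.val_injective fun s t hst => (hfY s).2.1 (hst ▸ t.2), ?_⟩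
  rintro (s | t)
  · exact ⟨h.subset_left s.2, (hfY s).1, (hfY s).2.2⟩
  · exact ⟨(hgX t).1, h.subset_right t.2, (hgX t).2.2⟩

end RelCover

section Perm

variable {V α : Type*}

theorem exists_perm_color_eq {ι : Type*} [Finite ι] {A : Set V} {c : V → α} {x : ι → V}
    {κ : ι → α} (hx : Injective x) (hκ : Injective κ) (hxA : ∀ i, x i ∈ A)
    (hκA : ∀ i, κ i ∈ c '' A) :
    ∃ σ : Perm V, (∀ a ∈ A, σ a ∈ A) ∧ (∀ v ∉ A, σ v = v) ∧ ∀ i, c (σ (x i)) = κ i := by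
  classical
  choose a haA hac using hκA
  obtain ⟨τ, hτ⟩ := Perm.exists_extending_pair (fun i => (⟨x i, hxA i⟩ : A))
    (fun i => (⟨a i, haA i⟩ : A)) (fun i j hij => hx (congrArg Subtype.val hij))
    (fun i j hij => hκ (by rw [← hac i, ← hac j]; exact congrArg (c ∘ Subtype.val) hij))
  refine ⟨Perm.ofSubtype τ, fun v hv => ?_, fun v hv => Perm.ofSubtype_apply_of_not_mem τ hv,
    fun i => ?_⟩
  · rw [Perm.ofSubtype_apply_of_mem τ hv]
    exact (τ _).2
  · rw [Perm.ofSubtype_apply_of_mem τ (hxA i), hτ i, hac i]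

theorem exists_perm_shared_color_eq {A B : Set V} (hAB : Disjoint A B) (hA : A.Finite)
    {c : V → α} (hcA : Set.InjOn c A) (hcB : Set.InjOn c B) {x y : ↥(c '' A ∩ c '' B) → V}
    (hx : Injective x) (hy : Injective y) (hxA : ∀ k, x k ∈ A) (hyB : ∀ k, y k ∈ B) :
    ∃ σ : Perm V, (∀ a ∈ A, σ a ∈ A) ∧ (∀ b ∈ B, σ b ∈ B) ∧ (∀ v, v ∉ A → v ∉ B → σ v = v) ∧
      ∀ a ∈ A, ∀ b ∈ B, c (σ a) = c (σ b) → ∃ k, x k = a ∧ y k = b := by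
  have : Finite ↥(c '' A ∩ c '' B) := ((hA.image c).inter_of_left _).to_subtype
  obtain ⟨σA, hσAA, hσA, hσAx⟩ :=
    exists_perm_color_eq hx Subtype.val_injective hxA fun k => k.2.1
  obtain ⟨σB, hσBB, hσB, hσBy⟩ :=
    exists_perm_color_eq hy Subtype.val_injective hyB fun k => k.2.2
  have hσ_A : ∀ a ∈ A, (σA * σB) a = σA a := fun a ha =>
    congrArg σA (hσB a (Set.disjoint_left.1 hAB ha))
  have hσ_B : ∀ b ∈ B, (σA * σB) b = σB b := fun b hb =>
    hσA _ (Set.disjoint_right.1 hAB (hσBB b hb))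
  refine ⟨σA * σB, fun a ha => hσ_A a ha ▸ hσAA a ha, fun b hb => hσ_B b hb ▸ hσBB b hb,
    fun v hvA hvB => by rw [Perm.mul_apply, hσB v hvB, hσA v hvA], fun a ha b hb hab => ?_⟩
  rw [hσ_A a ha, hσ_B b hb] at hab
  let k : ↥(c '' A ∩ c '' B) := ⟨c (σA a), ⟨σA a, hσAA a ha, rfl⟩, hab ▸ ⟨σB b, hσBB b hb, rfl⟩⟩
  refine ⟨k, σA.injective (hcA (hσAA _ (hxA k)) (hσAA a ha) ?_),
    σB.injective (hcB (hσBB _ (hyB k)) (hσBB b hb) ?_)⟩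
  · exact hσAx k
  · exact (hσBy k).trans hab

end Perm

namespace SimpleGraph

variable {V : Type*} {G : SimpleGraph V} {A B D : Set V} {x y : V}

def deleteCrossEdges (G : SimpleGraph V) (A B D : Set V) : SimpleGraph V where
  Adj x y := G.Adj x y ∧ ¬((x ∈ A ∧ y ∈ B ∨ x ∈ B ∧ y ∈ A) ∧ (x ∈ D ∨ y ∈ D))
  symm := ⟨fun _ _ h => ⟨h.1.symm, fun h' => h.2 ⟨h'.1.symm.imp And.symm And.symm, h'.2.symm⟩⟩⟩
  loopless := ⟨fun x h => G.loopless.irrefl x h.1⟩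

theorem deleteCrossEdges_le : G.deleteCrossEdges A B D ≤ G := fun _ _ h => h.1

theorem deleteCrossEdges_comm : G.deleteCrossEdges B A D = G.deleteCrossEdges A B D := by
  ext x y
  simp only [deleteCrossEdges, or_comm]

theorem deleteCrossEdges_adj_of_not_cross (h : G.Adj x y)
    (hxy : ¬(x ∈ A ∧ y ∈ B ∨ x ∈ B ∧ y ∈ A)) : (G.deleteCrossEdges A B D).Adj x y :=
  ⟨h, fun h' => hxy h'.1⟩

theorem cross_of_adj_of_not_adj_deleteCrossEdges (h : G.Adj x y)
    (h' : ¬(G.deleteCrossEdges A B D).Adj x y) :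
    (x ∈ A ∧ y ∈ B ∨ x ∈ B ∧ y ∈ A) ∧ (x ∈ D ∨ y ∈ D) :=
  not_not.1 fun hn => h' ⟨h, hn⟩

theorem deleteCrossEdges_lt {a b : V} (ha : a ∈ A) (hb : b ∈ B) (hab : G.Adj a b)
    (hD : a ∈ D ∨ b ∈ D) : G.deleteCrossEdges A B D < G :=
  deleteCrossEdges_le.lt_of_not_ge fun h => (h hab).2 ⟨Or.inl ⟨ha, hb⟩, hD⟩

def IsClaw (G : SimpleGraph V) (u a b c : V) : Prop :=
  a ≠ b ∧ a ≠ c ∧ b ≠ c ∧ G.Adj u a ∧ G.Adj u b ∧ G.Adj u c ∧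
    ¬G.Adj a b ∧ ¬G.Adj a c ∧ ¬G.Adj b c

theorem clawFree_iff : ClawFree G ↔ ∀ u a b c, ¬G.IsClaw u a b c := by
  simp only [ClawFree, IsClaw, not_exists]

theorem IsClaw.swap₁₂ {u a b c : V} (h : G.IsClaw u a b c) : G.IsClaw u b a c :=
  let ⟨hab, hac, hbc, hua, hub, huc, nab, nac, nbc⟩ := h
  ⟨hab.symm, hbc, hac, hub, hua, huc, fun h => nab h.symm, nbc, nac⟩

theorem IsClaw.swap₂₃ {u a b c : V} (h : G.IsClaw u a b c) : G.IsClaw u a c b :=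
  let ⟨hab, hac, hbc, hua, hub, huc, nab, nac, nbc⟩ := h
  ⟨hac, hab, hbc.symm, hua, huc, hub, nac, nab, fun h => nbc h.symm⟩

end SimpleGraph

namespace IsHomogeneousPair

variable {V α : Type*} {G H : SimpleGraph V} {A B D : Set V}

theorem symm (h : IsHomogeneousPair G A B) : IsHomogeneousPair G B A :=
  let ⟨hd, hA, hB, hout⟩ := h
  ⟨hd.symm, hB, hA, fun v hv => (hout v (Set.union_comm A B ▸ hv)).symm⟩

theorem adj_of_adj (h : IsHomogeneousPair G A B) {v a a' : V} (hvA : v ∉ A) (hvB : v ∉ B)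
    (ha : a ∈ A) (ha' : a' ∈ A) (hva : G.Adj v a) : G.Adj v a' :=
  ((h.2.2.2 v fun hv => hv.elim hvA hvB).1.resolve_right fun hn => hn a ha hva) a' ha'

theorem not_isClaw_deleteCrossEdges (h : IsHomogeneousPair G A B) (hG : ClawFree G)
    {u p q r : V} (hp : p ∈ A) (hq : q ∈ B) (hpB : ∃ b ∈ B, ¬G.Adj p b) :
    ¬(G.deleteCrossEdges A B D).IsClaw u p q r := by
  rintro ⟨-, hpr, hqr, hup, huq, hur, -, npr, nqr⟩
  obtain ⟨b, hb, npb⟩ := hpB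
  have hA : ∀ v ∈ A, v ∉ B := fun _ hv => Set.disjoint_left.1 h.1 hv
  have hrA : r ∉ A := fun hr =>
    npr (deleteCrossEdges_adj_of_not_cross (h.2.1 hp hr hpr) (by grind))
  have hrB : r ∉ B := fun hr =>
    nqr (deleteCrossEdges_adj_of_not_cross (h.2.2.1 hq hr hqr) (by grind))
  have nrp : ¬G.Adj r p := fun hrp => npr (deleteCrossEdges_adj_of_not_cross hrp.symm (by grind))
  have nrq : ¬G.Adj r q := fun hrq => nqr (deleteCrossEdges_adj_of_not_cross hrq.symm (by grind))
  -- `r` is anticomplete to `A ∪ B`, so the centre `u` lies outside and is complete to both.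
  have huA : u ∉ A := fun hu => nrp (h.adj_of_adj hrA hrB hu hp hur.1.symm)
  have huB : u ∉ B := fun hu => nrq (h.symm.adj_of_adj hrB hrA hu hq hur.1.symm)
  refine clawFree_iff.1 hG u p b r ⟨fun hpb => hA p hp (hpb ▸ hb), hpr, fun hbr => hrB (hbr ▸ hb),
    hup.1, h.symm.adj_of_adj huB huA hq hb huq.1, hur.1, npb, fun hpr => nrp hpr.symm,
    fun hbr => nrq (h.symm.adj_of_adj hrB hrA hb hq hbr.symm)⟩

theorem clawFree_deleteCrossEdges (h : IsHomogeneousPair G A B) (hG : ClawFree G)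
    (hD : ∀ d ∈ D, (d ∈ A → ∃ b ∈ B, ¬G.Adj d b) ∧ (d ∈ B → ∃ a ∈ A, ¬G.Adj d a)) :
    ClawFree (G.deleteCrossEdges A B D) := by
  have hAB : ∀ {u p q r}, p ∈ A → q ∈ B → p ∈ D →
      ¬(G.deleteCrossEdges A B D).IsClaw u p q r := fun hp hq hpD =>
    h.not_isClaw_deleteCrossEdges hG hp hq ((hD _ hpD).1 hp)
  have hBA : ∀ {u p q r}, p ∈ B → q ∈ A → p ∈ D →
      ¬(G.deleteCrossEdges A B D).IsClaw u p q r := fun hp hq hpD => by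
    rw [← deleteCrossEdges_comm]
    exact h.symm.not_isClaw_deleteCrossEdges hG hp hq ((hD _ hpD).2 hp)
  -- A new claw would have two leaves joined by a deleted edge.
  have hleaves : ∀ {u p q r}, (G.deleteCrossEdges A B D).IsClaw u p q r → ¬G.Adj p q := by
    intro u p q r hc hpq
    obtain ⟨hcross, hpD | hqD⟩ := cross_of_adj_of_not_adj_deleteCrossEdges hpq hc.2.2.2.2.2.2.1
    · rcases hcross with ⟨hp, hq⟩ | ⟨hp, hq⟩
      exacts [hAB hp hq hpD hc, hBA hp hq hpD hc]
    · rcases hcross with ⟨hp, hq⟩ | ⟨hp, hq⟩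
      exacts [hBA hq hp hqD hc.swap₁₂, hAB hq hp hqD hc.swap₁₂]
  refine clawFree_iff.2 fun u p q r hc => clawFree_iff.1 hG u p q r ?_
  have ⟨hpq, hpr, hqr, hup, huq, hur, _⟩ := hc
  exact ⟨hpq, hpr, hqr, hup.1, huq.1, hur.1, hleaves hc, hleaves hc.swap₂₃,
    hleaves hc.swap₁₂.swap₂₃⟩

theorem injOn_coloring (h : IsHomogeneousPair G A B)
    (hH : ∀ x y, G.Adj x y → ¬(x ∈ A ∧ y ∈ B ∨ x ∈ B ∧ y ∈ A) → H.Adj x y) (c : H.Coloring α) :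
    Set.InjOn c A := fun a ha a' ha' hc => by
  by_contra hne
  have hA : ∀ v ∈ A, v ∉ B := fun _ hv => Set.disjoint_left.1 h.1 hv
  exact c.valid (hH a a' (h.2.1 ha ha' hne) (by grind)) hc

theorem coloring_perm_ne_of_mem_left (h : IsHomogeneousPair G A B)
    (hH : ∀ x y, G.Adj x y → ¬(x ∈ A ∧ y ∈ B ∨ x ∈ B ∧ y ∈ A) → H.Adj x y) (c : H.Coloring α)
    {σ : Perm V} (hσA : ∀ a ∈ A, σ a ∈ A) (hσ : ∀ v, v ∉ A → v ∉ B → σ v = v) {u v : V}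
    (huv : G.Adj u v) (hu : u ∈ A) (hv : v ∉ B) : c (σ u) ≠ c (σ v) := by
  have hA : ∀ v ∈ A, v ∉ B := fun _ hv => Set.disjoint_left.1 h.1 hv
  by_cases hvA : v ∈ A
  · have hσuv := h.2.1 (hσA u hu) (hσA v hvA) (σ.injective.ne (G.ne_of_adj huv))
    have := hA _ (hσA u hu)
    have := hA _ (hσA v hvA)
    exact c.valid (hH _ _ hσuv (by grind))
  · rw [hσ v hvA hv]
    exact (c.valid (hH _ _ (h.adj_of_adj hvA hv hu (hσA u hu) huv.symm) (by grind))).symm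

theorem colorable_of_perm (h : IsHomogeneousPair G A B)
    (hH : ∀ x y, G.Adj x y → ¬(x ∈ A ∧ y ∈ B ∨ x ∈ B ∧ y ∈ A) → H.Adj x y) (c : H.Coloring α)
    (σ : Perm V) (hσA : ∀ a ∈ A, σ a ∈ A) (hσB : ∀ b ∈ B, σ b ∈ B)
    (hσ : ∀ v, v ∉ A → v ∉ B → σ v = v)
    (hcross : ∀ a ∈ A, ∀ b ∈ B, G.Adj a b → c (σ a) ≠ c (σ b)) : Nonempty (G.Coloring α) := by
  have hH' : ∀ x y, G.Adj x y → ¬(x ∈ B ∧ y ∈ A ∨ x ∈ A ∧ y ∈ B) → H.Adj x y :=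
    fun x y hxy hn => hH x y hxy (hn ∘ Or.symm)
  have hσ' : ∀ v, v ∉ B → v ∉ A → σ v = v := fun v hvB hvA => hσ v hvA hvB
  refine ⟨Coloring.mk (fun v => c (σ v)) fun {u v} huv => ?_⟩
  by_cases huA : u ∈ A
  · by_cases hvB : v ∈ B
    exacts [hcross u huA v hvB huv, h.coloring_perm_ne_of_mem_left hH c hσA hσ huv huA hvB]
  by_cases huB : u ∈ B
  · by_cases hvA : v ∈ A
    exacts [(hcross v hvA u huB huv.symm).symm,
      h.symm.coloring_perm_ne_of_mem_left hH' c hσB hσ' huv huB hvA]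
  by_cases hvA : v ∈ A
  · exact (h.coloring_perm_ne_of_mem_left hH c hσA hσ huv.symm hvA huB).symm
  by_cases hvB : v ∈ B
  · exact (h.symm.coloring_perm_ne_of_mem_left hH' c hσB hσ' huv.symm hvB huA).symm
  simp only [hσ u huA huB, hσ v hvA hvB]
  exact c.valid (hH u v huv (by grind))

theorem colorable_of_isMinRelCover {A B S T : Finset V} (h : IsHomogeneousPair G A B)
    (hST : IsMinRelCover (fun a b => ¬G.Adj a b) A B S T) {n : ℕ}
    (hc : (G.deleteCrossEdges A B (↑S ∪ ↑T)).Colorable n) : G.Colorable n := by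
  obtain ⟨c⟩ := hc
  have hAB : ∀ v ∈ A, v ∉ B := fun _ hv => Set.disjoint_left.1 h.1 hv
  obtain ⟨x, y, hx, hy, hxy⟩ := hST.exists_matching
  have hshared : ∀ k : ↥(c '' A ∩ c '' B),
      ∃ i : S ⊕ T, c (Sum.elim Subtype.val Subtype.val i) = k := by
    rintro ⟨_, ⟨a, ha, rfl⟩, b, hb, hba⟩
    have hST' : a ∈ S ∨ b ∈ T := by
      by_cases hab : G.Adj a b
      · obtain ⟨-, haD | hbD⟩ :=
          cross_of_adj_of_not_adj_deleteCrossEdges hab fun hH => c.valid hH hba.symm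
        · exact haD.elim Or.inl fun haT => (hAB a ha (hST.subset_right haT)).elim
        · exact hbD.elim (fun hbS => (hAB b (hST.subset_left hbS) hb).elim) Or.inr
      · exact hST.cover a ha b hb hab
    rcases hST' with haS | hbT
    exacts [⟨.inl ⟨a, haS⟩, rfl⟩, ⟨.inr ⟨b, hbT⟩, hba⟩]
  choose τ hτ using hshared
  have hτ_inj : Injective τ := fun k l hkl => Subtype.ext (by rw [← hτ k, ← hτ l, hkl])
  obtain ⟨σ, hσA, hσB, hσ, hσc⟩ := exists_perm_shared_color_eq h.1 A.finite_toSet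
    (h.injOn_coloring (fun _ _ => deleteCrossEdges_adj_of_not_cross) c)
    (h.symm.injOn_coloring
      (fun _ _ hxy hn => deleteCrossEdges_adj_of_not_cross hxy (hn ∘ Or.symm)) c)
    (hx.comp hτ_inj) (hy.comp hτ_inj) (fun k => (hxy _).1) (fun k => (hxy _).2.1)
  refine h.colorable_of_perm (fun _ _ => deleteCrossEdges_adj_of_not_cross) c σ hσA hσB hσ
    fun a ha b hb hab hcab => ?_
  obtain ⟨k, rfl, rfl⟩ := hσc a ha b hb hcab
  exact (hxy _).2.2 hab

end IsHomogeneousPair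

section WJoin

variable {V : Type*} {G : SimpleGraph V}

theorem IsMinRelCover.forall_mem_exists_not_adj {A B S T : Finset V} (hAB : Disjoint (A : Set V) B)
    (hST : IsMinRelCover (fun a b => ¬G.Adj a b) A B S T) :
    ∀ d ∈ (↑S ∪ ↑T : Set V), (d ∈ A → ∃ b ∈ B, ¬G.Adj d b) ∧ (d ∈ B → ∃ a ∈ A, ¬G.Adj d a) := by
  obtain ⟨f, -, hf⟩ := hST.exists_injective
  obtain ⟨g, -, hg⟩ := hST.swap.exists_injective
  rintro d (hd | hd)
  · exact ⟨fun _ => ⟨f ⟨d, hd⟩, (hf ⟨d, hd⟩).1, (hf ⟨d, hd⟩).2.2⟩,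
      fun hdB => (Set.disjoint_left.1 hAB (hST.subset_left hd) hdB).elim⟩
  · exact ⟨fun hdA => (Set.disjoint_left.1 hAB hdA (hST.subset_right hd)).elim,
      fun _ => ⟨g ⟨d, hd⟩, (hg ⟨d, hd⟩).1, fun h => (hg ⟨d, hd⟩).2.2 h.symm⟩⟩

theorem exists_adj_of_not_isReducedWJoin {A B S T : Set V}
    (hnr : ¬IsReducedWJoin G A B) (hcov : ∀ a ∈ A, ∀ b ∈ B, ¬G.Adj a b → a ∈ S ∨ b ∈ T) :
    ∃ a ∈ A, ∃ b ∈ B, G.Adj a b ∧ (a ∈ S ∨ b ∈ T) := by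
  by_contra! h
  refine hnr ⟨A \ S, A ∩ S, B \ T, B ∩ T, (Set.sdiff_union_inter A S).symm,
    Set.disjoint_sdiff_inter, (Set.sdiff_union_inter B T).symm, Set.disjoint_sdiff_inter,
    fun a ha b hb => ?_, fun a ha b hb hab => (h a ha.1 b hb hab).1 ha.2,
    fun a ha b hb hab => (h a ha b hb.1 hab).2 hb.2⟩
  by_contra hab
  exact (hcov a ha.1 b hb.1 hab).elim ha.2 hb.2

end WJoin

/-- If a claw-free graph `G` admits a non-reduced W-join, then there is a claw-free graph
`H` on the same vertex set with strictly fewer edges and the same chromatic number. -/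
theorem stmt18 {V : Type*} [Fintype V] (G : SimpleGraph V) (hcf : ClawFree G)
    (A B : Set V) (hWJ : IsWJoin G A B) (hnr : ¬ IsReducedWJoin G A B) :
    ∃ H : SimpleGraph V, ClawFree H ∧ H.edgeSet.ncard < G.edgeSet.ncard ∧
      H.chromaticNumber = G.chromaticNumber := by
  obtain ⟨A, rfl⟩ := A.toFinite.exists_finset_coe
  obtain ⟨B, rfl⟩ := B.toFinite.exists_finset_coe
  obtain ⟨hAB, -, -⟩ := hWJ
  obtain ⟨S, T, hST⟩ := exists_isMinRelCover (r := fun a b => ¬G.Adj a b) (X := A) (Y := B)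
  refine ⟨G.deleteCrossEdges A B (↑S ∪ ↑T),
    hAB.clawFree_deleteCrossEdges hcf (hST.forall_mem_exists_not_adj hAB.1), ?_, ?_⟩
  · obtain ⟨a, ha, b, hb, hab, hD⟩ := exists_adj_of_not_isReducedWJoin hnr hST.cover
    exact Set.ncard_lt_ncard (edgeSet_ssubset_edgeSet.2 (deleteCrossEdges_lt ha hb hab
      (hD.imp (Set.mem_union_left _) (Set.mem_union_right _))))
  · exact le_antisymm (chromaticNumber_mono _ deleteCrossEdges_le)
      (chromaticNumber_le_of_forall_imp fun _ => hAB.colorable_of_isMinRelCover hST)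
end
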